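/- arXiv:2303.02119 — 7 statements merged into one kernel-verified Lean document; each statement's English description precedes it below -/
import Mathlib

section
/- Let 𝒵 be a finite state space, let Z be a jump path on 𝒵 with counting functions N_{jk}, and let R ∈ (0,∞) be a censoring time. Then for every t ≥ 0 and every state j ∈ 𝒵 the censored sojourn–transition identity holds: 1{Z(t) = j}·1{t < R} = 1{Z(0) = j} − 1{R ≤ t}·1{Z(R) = j} + Σ_{k ∈ 𝒵, k ≠ j} ( N_{kj}(min(t,R)) − N_{jk}(min(t,R)) ). -/
/-- A jump path on a finite state space `𝒵`: a function `ℝ → 𝒵` (of interest on `[0,∞)`)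
which is right-continuous for the discrete topology (i.e. locally constant to the right),
admits left limits at every `t > 0` (i.e. is locally constant to the left, with value
`leftLim t`), and has only finitely many discontinuities in `(0,t]` for every `t > 0`. -/
structure JumpPath (𝒵 : Type*) [Fintype 𝒵] where
  toFun : ℝ → 𝒵
  leftLim : ℝ → 𝒵
  rightCont : ∀ t : ℝ, 0 ≤ t → ∃ δ > 0, ∀ s : ℝ, t ≤ s → s < t + δ → toFun s = toFun t
  leftLim_spec : ∀ t : ℝ, 0 < t → ∃ δ > 0, ∀ s : ℝ, t - δ < s → s < t → toFun s = leftLim t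
  finiteJumps : ∀ t : ℝ, 0 < t → {s : ℝ | 0 < s ∧ s ≤ t ∧ leftLim s ≠ toFun s}.Finite

/-- The counting function `N_{jk}(t) = #{s ∈ (0,t] : Z(s−) = j, Z(s) = k}` of a jump path. -/
noncomputable def JumpPath.countN {𝒵 : Type*} [Fintype 𝒵] (P : JumpPath 𝒵)
    (j k : 𝒵) (t : ℝ) : ℕ :=
  {s : ℝ | 0 < s ∧ s ≤ t ∧ P.leftLim s = j ∧ P.toFun s = k}.ncard

/-!
Between two jump times a jump path is locally constant from both sides, hence constant, because
intervals are connected. So `g (Z u) - g (Z 0)` telescopes into the sum of the increments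
`g (Z s) - g (Z (s-))` over the finitely many jump times `s ∈ (0, u]`. For `g` the indicator of `j`,
the increment at a jump from `a` to `b` is `∑_{k ≠ j} (1{a = k, b = j} - 1{a = j, b = k})`, and
summing over the jumps turns this into the net flow `∑_{k ≠ j} (N_{kj}(u) - N_{jk}(u))`.
Censoring at `R` amounts to evaluating this identity at `min t R`.
-/

open Set Filter Topology

theorem eq_of_eventually_eq_nhdsGE_of_eventually_eq_nhdsLT {α : Type*} {f : ℝ → α} {a b : ℝ}
    (hab : a ≤ b) (hright : ∀ x ∈ Ico a b, ∀ᶠ y in 𝓝[≥] x, f y = f x)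
    (hleft : ∀ x ∈ Ioc a b, ∀ᶠ y in 𝓝[<] x, f y = f x) : f b = f a := by
  let : TopologicalSpace α := ⊥
  have : DiscreteTopology α := ⟨rfl⟩
  refine isPreconnected_Icc.constant (fun x hx => ?_) (right_mem_Icc.2 hab) (left_mem_Icc.2 hab)
  rw [ContinuousWithinAt, nhds_discrete, tendsto_pure, eventually_nhdsWithin_iff,
    ← nhdsLT_sup_nhdsGE, eventually_sup]
  constructor
  · rcases hx.1.eq_or_lt with rfl | hax
    · exact eventually_nhdsWithin_of_forall fun y hy hy' => absurd hy'.1 (not_le.2 hy)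
    · exact (hleft x ⟨hax, hx.2⟩).mono fun y hy _ => hy
  · rcases hx.2.eq_or_lt with rfl | hxb
    · exact eventually_nhdsWithin_of_forall fun y hy hy' => by rw [le_antisymm hy'.2 hy]
    · exact (hright x ⟨hx.1, hxb⟩).mono fun y hy _ => hy

theorem Finset.sum_filter_ne_ite_sub_ite {ι R : Type*} [Fintype ι] [DecidableEq ι]
    [AddCommGroupWithOne R] (a b j : ι) :
    ∑ k ∈ univ.filter (· ≠ j),
        ((if a = k ∧ b = j then 1 else 0) - (if a = j ∧ b = k then 1 else 0) : R)
      = (if b = j then 1 else 0) - (if a = j then 1 else 0) := by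
  by_cases hb : b = j <;> by_cases ha : a = j <;> simp [hb, ha, Finset.sum_ite_eq]

namespace JumpPath

variable {𝒵 : Type*} [Fintype 𝒵] (P : JumpPath 𝒵)

theorem eventually_eq_nhdsGE {t : ℝ} (ht : 0 ≤ t) : ∀ᶠ s in 𝓝[≥] t, P.toFun s = P.toFun t := by
  obtain ⟨δ, hδ, h⟩ := P.rightCont t ht
  exact mem_nhdsGE_iff_exists_Ico_subset.2 ⟨t + δ, by simpa using hδ, fun s hs => h s hs.1 hs.2⟩

theorem eventually_eq_leftLim {t : ℝ} (ht : 0 < t) : ∀ᶠ s in 𝓝[<] t, P.toFun s = P.leftLim t := by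
  obtain ⟨δ, hδ, h⟩ := P.leftLim_spec t ht
  exact mem_of_superset (Ioo_mem_nhdsLT (by linarith : t - δ < t)) fun s hs => h s hs.1 hs.2

theorem leftLim_eq_of_eventually_eq {t : ℝ} (ht : 0 < t) {z : 𝒵}
    (h : ∀ᶠ s in 𝓝[<] t, P.toFun s = z) : P.leftLim t = z := by
  obtain ⟨s, hs, hsz⟩ := ((P.eventually_eq_leftLim ht).and h).exists
  exact hs.symm.trans hsz

theorem toFun_eq_of_forall_leftLim_eq {a b : ℝ} (ha : 0 ≤ a) (hab : a ≤ b)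
    (h : ∀ s ∈ Ioc a b, P.leftLim s = P.toFun s) : P.toFun b = P.toFun a :=
  eq_of_eventually_eq_nhdsGE_of_eventually_eq_nhdsLT hab
    (fun _ hx => P.eventually_eq_nhdsGE (ha.trans hx.1))
    (fun x hx => h x hx ▸ P.eventually_eq_leftLim (ha.trans_lt hx.1))

theorem finite_setOf_jump (u : ℝ) : {s : ℝ | 0 < s ∧ s ≤ u ∧ P.leftLim s ≠ P.toFun s}.Finite := by
  rcases lt_or_ge 0 u with hu | hu
  · exact P.finiteJumps u hu
  · exact Set.finite_empty.subset fun s hs => (hs.1.trans_le (hs.2.1.trans hu)).false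

noncomputable def jumpTimes (u : ℝ) : Finset ℝ := (P.finite_setOf_jump u).toFinset

@[simp]
theorem mem_jumpTimes {s u : ℝ} :
    s ∈ P.jumpTimes u ↔ 0 < s ∧ s ≤ u ∧ P.leftLim s ≠ P.toFun s :=
  Set.Finite.mem_toFinset _

theorem exists_jumpTimes_eq_insert {m u : ℝ} (hm : m ∈ P.jumpTimes u)
    (hmax : ∀ s ∈ P.jumpTimes u, s ≤ m) :
    ∃ v, 0 ≤ v ∧ v < m ∧ P.toFun v = P.leftLim m ∧ P.jumpTimes u = insert m (P.jumpTimes v) := by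
  obtain ⟨hm0, hmu, -⟩ := P.mem_jumpTimes.1 hm
  obtain ⟨δ, hδ, hconst⟩ := P.leftLim_spec m hm0
  -- `v` is taken in the interval left of `m` on which `Z = Z(m-)`, so no jump lies in `(v, m)`.
  obtain ⟨v, hv, hvm⟩ := exists_between (max_lt hm0 (by linarith : m - δ < m))
  have hv_const : ∀ s, v ≤ s → s < m → P.toFun s = P.leftLim m := fun s hvs hsm =>
    hconst s (by linarith [le_max_right 0 (m - δ)]) hsm
  refine ⟨v, (le_max_left _ _).trans hv.le, hvm, hv_const v le_rfl hvm, ?_⟩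
  ext s
  rw [Finset.mem_insert, mem_jumpTimes, mem_jumpTimes]
  constructor
  · rintro ⟨hs0, hsu, hjump⟩
    rcases (hmax s (P.mem_jumpTimes.2 ⟨hs0, hsu, hjump⟩)).eq_or_lt with rfl | hsm
    · exact Or.inl rfl
    refine Or.inr ⟨hs0, not_lt.1 fun hvs => hjump ?_, hjump⟩
    rw [hv_const s hvs.le hsm]
    exact P.leftLim_eq_of_eventually_eq hs0 <| mem_of_superset (Ioo_mem_nhdsLT hvs)
      fun y hy => hv_const y hy.1.le (hy.2.trans hsm)
  · rintro (rfl | ⟨hs0, hsv, hjump⟩)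
    · exact P.mem_jumpTimes.1 hm
    · exact ⟨hs0, hsv.trans (hvm.le.trans hmu), hjump⟩

theorem apply_toFun_eq_add_sum_jumpTimes {M : Type*} [AddCommGroup M] (g : 𝒵 → M) {u : ℝ}
    (hu : 0 ≤ u) :
    g (P.toFun u) = g (P.toFun 0) + ∑ s ∈ P.jumpTimes u, (g (P.toFun s) - g (P.leftLim s)) := by
  induction hn : (P.jumpTimes u).card using Nat.strong_induction_on generalizing u with
  | _ n ih =>
    rcases (P.jumpTimes u).eq_empty_or_nonempty with hJ | hJ
    · rw [hJ, Finset.sum_empty, add_zero, P.toFun_eq_of_forall_leftLim_eq le_rfl hu fun s hs => ?_]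
      by_contra hjump
      exact Finset.notMem_empty s (hJ ▸ P.mem_jumpTimes.2 ⟨hs.1, hs.2, hjump⟩)
    set m := (P.jumpTimes u).max' hJ
    have hm : m ∈ P.jumpTimes u := (P.jumpTimes u).max'_mem hJ
    obtain ⟨hm0, hmu, -⟩ := P.mem_jumpTimes.1 hm
    obtain ⟨v, hv0, hvm, hv_leftLim, hJv⟩ :=
      P.exists_jumpTimes_eq_insert hm fun s hs => (P.jumpTimes u).le_max' s hs
    have hmv : m ∉ P.jumpTimes v := fun h => (P.mem_jumpTimes.1 h).2.1.not_gt hvm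
    have hum : P.toFun u = P.toFun m := P.toFun_eq_of_forall_leftLim_eq hm0.le hmu fun s hs => by
      by_contra hjump
      exact hs.1.not_ge <|
        (P.jumpTimes u).le_max' s (P.mem_jumpTimes.2 ⟨hm0.trans hs.1, hs.2, hjump⟩)
    have hcard : (P.jumpTimes v).card < n := by
      rw [← hn, hJv, Finset.card_insert_of_notMem hmv]
      omega
    rw [hum, hJv, Finset.sum_insert hmv, ← hv_leftLim, ih _ hcard hv0 rfl]
    abel

variable [DecidableEq 𝒵]

theorem countN_eq_card_filter {p q : 𝒵} (hpq : p ≠ q) (u : ℝ) :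
    P.countN p q u = ((P.jumpTimes u).filter fun s => P.leftLim s = p ∧ P.toFun s = q).card := by
  rw [countN, ← Set.ncard_coe_finset]
  congr 1
  ext s
  simp only [Finset.coe_filter, mem_jumpTimes]
  constructor
  · rintro ⟨hs, hsu, rfl, rfl⟩
    exact ⟨⟨hs, hsu, hpq⟩, rfl, rfl⟩
  · rintro ⟨⟨hs, hsu, -⟩, hp, hq⟩
    exact ⟨hs, hsu, hp, hq⟩

theorem sum_countN_sub_countN (j : 𝒵) (u : ℝ) :
    ∑ k ∈ Finset.univ.filter (· ≠ j), ((P.countN k j u : ℝ) - P.countN j k u)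
      = ∑ s ∈ P.jumpTimes u,
          ((if P.toFun s = j then 1 else 0) - (if P.leftLim s = j then 1 else 0)) := by
  calc _ = ∑ k ∈ Finset.univ.filter (· ≠ j), ∑ s ∈ P.jumpTimes u,
          ((if P.leftLim s = k ∧ P.toFun s = j then 1 else 0)
            - (if P.leftLim s = j ∧ P.toFun s = k then 1 else 0) : ℝ) := by
        refine Finset.sum_congr rfl fun k hk => ?_
        have hkj : k ≠ j := (Finset.mem_filter.1 hk).2
        rw [Finset.sum_sub_distrib, Finset.sum_boole, Finset.sum_boole,
          ← P.countN_eq_card_filter hkj, ← P.countN_eq_card_filter hkj.symm]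
    _ = _ := by
        rw [Finset.sum_comm]
        exact Finset.sum_congr rfl fun s _ => Finset.sum_filter_ne_ite_sub_ite _ _ j

theorem sojourn_transition_identity (j : 𝒵) {u : ℝ} (hu : 0 ≤ u) :
    (if P.toFun u = j then (1 : ℝ) else 0) = (if P.toFun 0 = j then 1 else 0)
      + ∑ k ∈ Finset.univ.filter (· ≠ j), ((P.countN k j u : ℝ) - P.countN j k u) := by
  rw [sum_countN_sub_countN]
  exact P.apply_toFun_eq_add_sum_jumpTimes (fun z => if z = j then 1 else 0) hu

end JumpPath

/-- Censored sojourn–transition identity: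
`1{Z(t)=j}·1{t<R} = 1{Z(0)=j} − 1{R≤t}·1{Z(R)=j} + Σ_{k≠j} (N_{kj}(t∧R) − N_{jk}(t∧R))`. -/
theorem censored_sojourn_transition_identity {𝒵 : Type*} [Fintype 𝒵] [DecidableEq 𝒵]
    (P : JumpPath 𝒵) (R : ℝ) (hR : 0 < R) (t : ℝ) (ht : 0 ≤ t) (j : 𝒵) :
    (if P.toFun t = j then (1 : ℝ) else 0) * (if t < R then (1 : ℝ) else 0)
      = (if P.toFun 0 = j then (1 : ℝ) else 0)
        - (if R ≤ t then (1 : ℝ) else 0) * (if P.toFun R = j then (1 : ℝ) else 0)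
        + ∑ k ∈ Finset.univ.filter (fun k => k ≠ j),
            ((P.countN k j (min t R) : ℝ) - (P.countN j k (min t R) : ℝ)) := by
  rcases lt_or_ge t R with htR | hRt
  · rw [min_eq_left htR.le, if_pos htR, if_neg htR.not_ge, P.sojourn_transition_identity j ht]
    ring
  · rw [min_eq_right hRt, if_neg hRt.not_gt, if_pos hRt, P.sojourn_transition_identity j hR.le]
    ring
end

section
/- Let θ > 0. Let F, G : ℝ → ℝ be nondecreasing right-continuous functions with associated Lebesgue–Stieltjes measures μ_F, μ_G, and set D(s) := (F(s) − F(0)) − (G(s) − G(0)). Let h₁, h₂ : ℝ → ℝ be nondecreasing right-continuous and put h := h₁ − h₂, H := sup_{s ∈ [0,θ]} |h(s)| and V := (h₁(θ) − h₁(0)) + (h₂(θ) − h₂(0)). Then for every t ∈ [0,θ]: | ∫_{(0,t]} h(s−) μ_F(ds) − ∫_{(0,t]} h(s−) μ_G(ds) | ≤ (H + V) · sup_{s ∈ [0,θ]} |D(s)|. -/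
/-!
Fubini on the triangle `{a < s ≤ u < b}` for `μ_F ⊗ μ_h` gives, for every nondecreasing
right-continuous `h`,
`∫_{(a,b]} h(s−) μ_F(ds) = h(b−) (F b − F a) − ∫_{(a,b)} (F u − F a) μ_h(du)`.
Subtracting the same identity for `G` and then splitting `h = h₁ − h₂`, the quantity to bound
becomes `h(t−) D(t) − ∫_{(0,t)} D dμ_{h₁} + ∫_{(0,t)} D dμ_{h₂}`, whose three terms are at most
`H sup|D|`, `(h₁ θ − h₁ 0) sup|D|` and `(h₂ θ − h₂ 0) sup|D|`.
-/

open Set MeasureTheory Filter Topology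

theorem setLIntegral_measure_Ico_eq {μ ν : Measure ℝ} [SFinite μ] [SFinite ν] (a b : ℝ) :
    ∫⁻ s in Ioc a b, ν (Ico s b) ∂μ = ∫⁻ u in Ioo a b, μ (Ioc a u) ∂ν := by
  set T : Set (ℝ × ℝ) := {p | a < p.1 ∧ p.1 ≤ p.2 ∧ p.2 < b}
  have hT : MeasurableSet T :=
    (measurableSet_lt measurable_const measurable_fst).inter
      ((measurableSet_le measurable_fst measurable_snd).inter
        (measurableSet_lt measurable_snd measurable_const))
  calc ∫⁻ s in Ioc a b, ν (Ico s b) ∂μ = (μ.prod ν) T := by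
        rw [Measure.prod_apply hT, ← lintegral_indicator measurableSet_Ioc]
        congr 1 with s
        by_cases hs : s ∈ Ioc a b
        · rw [indicator_of_mem hs]
          congr 1 with u
          simp [T, hs.1]
        · rw [indicator_of_notMem hs, eq_comm, measure_eq_zero_iff_ae_notMem]
          exact ae_of_all _ fun u hu => hs ⟨hu.1, hu.2.1.trans hu.2.2.le⟩
    _ = ∫⁻ u in Ioo a b, μ (Ioc a u) ∂ν := by
        rw [Measure.prod_apply_symm hT, ← lintegral_indicator measurableSet_Ioo]
        congr 1 with u
        by_cases hu : u ∈ Ioo a b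
        · rw [indicator_of_mem hu]
          congr 1 with s
          simp [T, hu.2]
        · rw [indicator_of_notMem hu, measure_eq_zero_iff_ae_notMem]
          exact ae_of_all _ fun s hs => hu ⟨hs.1.trans_le hs.2.1, hs.2.2⟩

theorem Monotone.bddAbove_image_abs_sub {f g : ℝ → ℝ} (hf : Monotone f) (hg : Monotone g)
    (a b : ℝ) : BddAbove ((fun x => |f x - g x|) '' Icc a b) := by
  refine ⟨max (f b - g a) (g b - f a), ?_⟩
  rintro _ ⟨x, ⟨hax, hxb⟩, rfl⟩
  rw [abs_le']
  constructor
  · exact le_max_of_le_left (sub_le_sub (hf hxb) (hg hax))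
  · exact le_max_of_le_right (by linarith [hf hax, hg hxb])

namespace StieltjesFunction

theorem measureReal_Ioc (f : StieltjesFunction ℝ) {a b : ℝ} (hab : a ≤ b) :
    f.measure.real (Ioc a b) = f b - f a := by
  rw [measureReal_def, f.measure_Ioc, ENNReal.toReal_ofReal (sub_nonneg.2 (f.mono hab))]

theorem integrableOn_leftLim_Ioc (h : StieltjesFunction ℝ) (μ : Measure ℝ)
    [IsLocallyFiniteMeasure μ] (a b : ℝ) : IntegrableOn (Function.leftLim h) (Ioc a b) μ :=
  (h.mono.leftLim.locallyIntegrable.integrableOn_isCompact isCompact_Icc).mono_set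
    Ioc_subset_Icc_self

theorem integrableOn_sub_const_Ioo (f : StieltjesFunction ℝ) (μ : Measure ℝ)
    [IsLocallyFiniteMeasure μ] (a b c : ℝ) : IntegrableOn (fun u => f u - c) (Ioo a b) μ :=
  ((f.mono.locallyIntegrable.integrableOn_isCompact isCompact_Icc).sub
    (integrableOn_const (C := c) isCompact_Icc.measure_lt_top.ne)).mono_set Ioo_subset_Icc_self

theorem integral_leftLim_eq (F h : StieltjesFunction ℝ) {a b : ℝ} (hab : a ≤ b) :
    ∫ s in Ioc a b, Function.leftLim h s ∂F.measure
      = Function.leftLim h b * (F b - F a) - ∫ u in Ioo a b, (F u - F a) ∂h.measure := by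
  have hIncrement : ∫ s in Ioc a b, (Function.leftLim h b - Function.leftLim h s) ∂F.measure
      = ∫ u in Ioo a b, (F u - F a) ∂h.measure :=
    calc ∫ s in Ioc a b, (Function.leftLim h b - Function.leftLim h s) ∂F.measure
        = ∫ s in Ioc a b, (h.measure (Ico s b)).toReal ∂F.measure := by
          refine setIntegral_congr_fun measurableSet_Ioc fun s hs => ?_
          rw [h.measure_Ico, ENNReal.toReal_ofReal (sub_nonneg.2 (h.mono.leftLim hs.2))]
      _ = ∫ u in Ioo a b, (F.measure (Ioc a u)).toReal ∂h.measure := by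
          rw [integral_toReal, integral_toReal, setLIntegral_measure_Ico_eq]
          · exact (Monotone.measurable fun _ _ huv =>
              measure_mono (Ioc_subset_Ioc_right huv)).aemeasurable
          · exact ae_of_all _ fun u => by simp
          · exact (Antitone.measurable fun _ _ hst =>
              measure_mono (Ico_subset_Ico_left hst)).aemeasurable
          · exact ae_of_all _ fun s => by simp
      _ = ∫ u in Ioo a b, (F u - F a) ∂h.measure := by
          refine setIntegral_congr_fun measurableSet_Ioo fun u hu => ?_
          rw [F.measure_Ioc, ENNReal.toReal_ofReal (sub_nonneg.2 (F.mono hu.1.le))]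
  rw [← hIncrement, integral_sub (integrableOn_const (C := Function.leftLim h b) (by simp))
    (h.integrableOn_leftLim_Ioc _ a b), setIntegral_const, F.measureReal_Ioc hab, smul_eq_mul]
  ring

theorem integral_leftLim_sub_integral_leftLim (F G h : StieltjesFunction ℝ) {a b : ℝ}
    (hab : a ≤ b) :
    (∫ s in Ioc a b, Function.leftLim h s ∂F.measure)
        - ∫ s in Ioc a b, Function.leftLim h s ∂G.measure
      = Function.leftLim h b * ((F b - F a) - (G b - G a))
        - ∫ u in Ioo a b, ((F u - F a) - (G u - G a)) ∂h.measure := by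
  rw [integral_leftLim_eq F h hab, integral_leftLim_eq G h hab,
    integral_sub (F.integrableOn_sub_const_Ioo _ a b _) (G.integrableOn_sub_const_Ioo _ a b _)]
  ring

theorem integral_leftLim_sub_sub_integral_leftLim_sub (F G h₁ h₂ : StieltjesFunction ℝ)
    {a b : ℝ} (hab : a ≤ b) :
    (∫ s in Ioc a b, Function.leftLim (fun u => h₁ u - h₂ u) s ∂F.measure)
        - ∫ s in Ioc a b, Function.leftLim (fun u => h₁ u - h₂ u) s ∂G.measure
      = (Function.leftLim h₁ b - Function.leftLim h₂ b) * ((F b - F a) - (G b - G a))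
        - ((∫ u in Ioo a b, ((F u - F a) - (G u - G a)) ∂h₁.measure)
          - ∫ u in Ioo a b, ((F u - F a) - (G u - G a)) ∂h₂.measure) := by
  have hleftLim : Function.leftLim (fun u => h₁ u - h₂ u)
      = fun s => Function.leftLim h₁ s - Function.leftLim h₂ s :=
    funext fun s => leftLim_eq_of_tendsto
      ((h₁.mono.tendsto_leftLim s).sub (h₂.mono.tendsto_leftLim s))
  rw [hleftLim,
    integral_sub (h₁.integrableOn_leftLim_Ioc _ a b) (h₂.integrableOn_leftLim_Ioc _ a b),
    integral_sub (h₁.integrableOn_leftLim_Ioc _ a b) (h₂.integrableOn_leftLim_Ioc _ a b)]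
  linear_combination integral_leftLim_sub_integral_leftLim F G h₁ hab
    - integral_leftLim_sub_integral_leftLim F G h₂ hab

theorem abs_integral_leftLim_sub_sub_integral_leftLim_sub_le (F G h₁ h₂ : StieltjesFunction ℝ)
    {a b c H δ : ℝ} (hab : a ≤ b) (hbc : b ≤ c)
    (hH : ∀ s ∈ Icc a c, |h₁ s - h₂ s| ≤ H)
    (hδ : ∀ s ∈ Icc a c, |(F s - F a) - (G s - G a)| ≤ δ) :
    |(∫ s in Ioc a b, Function.leftLim (fun u => h₁ u - h₂ u) s ∂F.measure)
        - ∫ s in Ioc a b, Function.leftLim (fun u => h₁ u - h₂ u) s ∂G.measure|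
      ≤ (H + ((h₁ c - h₁ a) + (h₂ c - h₂ a))) * δ := by
  have hac : a ∈ Icc a c := ⟨le_rfl, hab.trans hbc⟩
  have hδ0 : 0 ≤ δ := (abs_nonneg _).trans (hδ a hac)
  have hH0 : 0 ≤ H := (abs_nonneg _).trans (hH a hac)
  have hjump : |(Function.leftLim h₁ b - Function.leftLim h₂ b) * ((F b - F a) - (G b - G a))|
      ≤ H * δ := by
    rcases hab.eq_or_lt with rfl | hab
    · simpa using mul_nonneg hH0 hδ0
    have hlim : Tendsto (fun u => |h₁ u - h₂ u|) (𝓝[<] b)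
        (𝓝 |Function.leftLim h₁ b - Function.leftLim h₂ b|) :=
      ((h₁.mono.tendsto_leftLim b).sub (h₂.mono.tendsto_leftLim b)).abs
    rw [abs_mul]
    refine mul_le_mul (le_of_tendsto hlim ?_) (hδ b ⟨hab.le, hbc⟩) (abs_nonneg _) hH0
    filter_upwards [Ioo_mem_nhdsLT hab] with s hs using hH s ⟨hs.1.le, hs.2.le.trans hbc⟩
  have hintegral (g : StieltjesFunction ℝ) :
      |∫ u in Ioo a b, ((F u - F a) - (G u - G a)) ∂g.measure| ≤ δ * (g c - g a) :=
    calc |∫ u in Ioo a b, ((F u - F a) - (G u - G a)) ∂g.measure|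
        ≤ δ * g.measure.real (Ioo a b) :=
          norm_setIntegral_le_of_norm_le_const (by simp) fun u (hu : u ∈ Ioo a b) =>
            (Real.norm_eq_abs _).trans_le (hδ u ⟨hu.1.le, hu.2.le.trans hbc⟩)
      _ ≤ δ * g.measure.real (Ioc a c) := by
          gcongr
          · simp
          · exact Ioo_subset_Ioc_self.trans (Ioc_subset_Ioc_right hbc)
      _ = δ * (g c - g a) := by rw [g.measureReal_Ioc (hab.trans hbc)]
  rw [integral_leftLim_sub_sub_integral_leftLim_sub F G h₁ h₂ hab]
  exact ((abs_sub _ _).trans (add_le_add hjump ((abs_sub _ _).trans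
    (add_le_add (hintegral h₁) (hintegral h₂))))).trans_eq (by ring)

end StieltjesFunction

open StieltjesFunction

theorem stieltjes_integration_by_parts_bound_general (θ : ℝ)
    (F G h₁ h₂ : StieltjesFunction ℝ)
    (H V : ℝ)
    (hH : H = sSup ((fun s => |h₁ s - h₂ s|) '' Icc 0 θ))
    (hV : V = (h₁ θ - h₁ 0) + (h₂ θ - h₂ 0)) :
    ∀ t ∈ Icc (0:ℝ) θ,
      |(∫ s in Ioc (0:ℝ) t, Function.leftLim (fun u => h₁ u - h₂ u) s ∂F.measure)
          - ∫ s in Ioc (0:ℝ) t, Function.leftLim (fun u => h₁ u - h₂ u) s ∂G.measure|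
        ≤ (H + V) * sSup ((fun s => |(F s - F 0) - (G s - G 0)|) '' Icc 0 θ) := by
  rintro t ⟨ht0, htθ⟩
  subst hH hV
  have hF : Monotone fun s => F s - F 0 := fun _ _ hst => sub_le_sub_right (F.mono hst) _
  have hG : Monotone fun s => G s - G 0 := fun _ _ hst => sub_le_sub_right (G.mono hst) _
  exact abs_integral_leftLim_sub_sub_integral_leftLim_sub_le F G h₁ h₂ ht0 htθ
    (fun s hs => le_csSup (h₁.mono.bddAbove_image_abs_sub h₂.mono 0 θ) (mem_image_of_mem _ hs))
    (fun s hs => le_csSup (hF.bddAbove_image_abs_sub hG 0 θ) (mem_image_of_mem _ hs))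

/-- Integration-by-parts bound for Lebesgue–Stieltjes integrals: for nondecreasing
right-continuous `F, G` with Stieltjes measures `μ_F, μ_G`, a function `h = h₁ − h₂`
of bounded variation (difference of nondecreasing right-continuous functions), with
`H = sup_{[0,θ]} |h|`, `V = (h₁(θ)−h₁(0)) + (h₂(θ)−h₂(0))` and
`D(s) = (F(s)−F(0)) − (G(s)−G(0))`, one has for all `t ∈ [0,θ]`:
`|∫_{(0,t]} h(s−) μ_F(ds) − ∫_{(0,t]} h(s−) μ_G(ds)| ≤ (H + V)·sup_{[0,θ]} |D|`. -/
theorem stieltjes_integration_by_parts_bound (θ : ℝ) (hθ : 0 < θ)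
    (F G h₁ h₂ : StieltjesFunction ℝ)
    (H V : ℝ)
    (hH : H = sSup ((fun s => |h₁ s - h₂ s|) '' Icc 0 θ))
    (hV : V = (h₁ θ - h₁ 0) + (h₂ θ - h₂ 0)) :
    ∀ t ∈ Icc (0:ℝ) θ,
      |(∫ s in Ioc (0:ℝ) t, Function.leftLim (fun u => h₁ u - h₂ u) s ∂F.measure)
          - ∫ s in Ioc (0:ℝ) t, Function.leftLim (fun u => h₁ u - h₂ u) s ∂G.measure|
        ≤ (H + V) * sSup ((fun s => |(F s - F 0) - (G s - G 0)|) '' Icc 0 θ) :=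
  stieltjes_integration_by_parts_bound_general θ F G h₁ h₂ H V hH hV
end

section
/- Let θ > 0 and ε ∈ (0,1]. For each n ∈ ℕ let A_n : ℝ → ℝ be nondecreasing and right-continuous with A_n(0) = 0, and let A : ℝ → ℝ be nondecreasing and right-continuous with A(0) = 0. For each n let p_n : [0,θ] → [0,1] be right-continuous with left limits at every point of (0,θ], and let p : [0,θ] → [0,1] be right-continuous and of bounded variation on [0,θ]. Assume sup_{t ∈ [0,θ]} |A_n(t) − A(t)| → 0 and sup_{t ∈ [0,θ]} |p_n(t) − p(t)| → 0 as n → ∞. Then sup_{t ∈ [0,θ]} | ∫_{(0,t]} ( p_n(s−) ∨ ε )^{−1} μ_{A_n}(ds) − ∫_{(0,t]} ( p(s−) ∨ ε )^{−1} μ_A(ds) | → 0 as n → ∞. -/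
/-! Split the error into `∫ ((p_n(s−) ∨ ε)⁻¹ − (q(s−) ∨ ε)⁻¹) dA_n`, which is at most
`ε⁻² sup |p_n − q|` times the eventually bounded mass of `A_n` on `(0, θ]`, and
`∫ (q(s−) ∨ ε)⁻¹ d(A_n − A)`. The integrand of the latter is a Lipschitz function of the left
limit of the bounded-variation function `q`, hence a difference of two monotone functions. For
monotone `g` the layer-cake formula writes `∫_{(0,t]} g dμ` as an integral over levels `y` of the
`μ`-measures of the intervals `{g ≥ y} ∩ (0, t]`, and the `μ_{A_n}`- and `μ_A`-measures of an
interval in `(0, θ]` differ by at most `2 sup |A_n − A|`: both are differences of values or left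
limits of the distribution functions at the endpoints. -/

open Set Filter MeasureTheory Topology Function

theorem tendstoUniformlyOn_of_eventually_dist_le_mul {ι α : Type*} {l : Filter ι}
    {F : ι → α → ℝ} {f : α → ℝ} {s : Set α} (C : ℝ)
    (h : ∀ d > 0, ∀ᶠ n in l, ∀ x ∈ s, dist (f x) (F n x) ≤ C * d) :
    TendstoUniformlyOn F f l s := by
  refine Metric.tendstoUniformlyOn_iff.2 fun ρ hρ => ?_
  have hd : 0 < ρ / (|C| + 1) := by positivity
  filter_upwards [h _ hd] with n hn x hx
  calc dist (f x) (F n x) ≤ C * (ρ / (|C| + 1)) := hn x hx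
    _ < (|C| + 1) * (ρ / (|C| + 1)) := by nlinarith [le_abs_self C]
    _ = ρ := by field_simp

theorem abs_leftLim_sub_leftLim_le {f g : ℝ → ℝ} {x d : ℝ}
    (hf : ∃ l, Tendsto f (𝓝[<] x) (𝓝 l)) (hg : ∃ l, Tendsto g (𝓝[<] x) (𝓝 l))
    (hd : ∀ᶠ y in 𝓝[<] x, |f y - g y| ≤ d) : |leftLim f x - leftLim g x| ≤ d := by
  obtain ⟨l, hl⟩ := hf
  obtain ⟨l', hl'⟩ := hg
  rw [leftLim_eq_of_tendsto hl, leftLim_eq_of_tendsto hl']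
  exact le_of_tendsto (hl.sub hl').abs hd

theorem abs_inv_max_le {ε : ℝ} (hε : 0 < ε) (x : ℝ) : |(max x ε)⁻¹| ≤ ε⁻¹ := by
  rw [abs_of_pos (inv_pos.2 (hε.trans_le (le_max_right _ _)))]
  exact inv_anti₀ hε (le_max_right _ _)

theorem abs_inv_max_sub_inv_max_le {ε : ℝ} (hε : 0 < ε) (x y : ℝ) :
    |(max x ε)⁻¹ - (max y ε)⁻¹| ≤ ε⁻¹ ^ 2 * |x - y| := by
  have hx : 0 < max x ε := hε.trans_le (le_max_right _ _)
  have hy : 0 < max y ε := hε.trans_le (le_max_right _ _)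
  rw [inv_sub_inv hx.ne' hy.ne', abs_div, abs_of_pos (mul_pos hx hy), div_le_iff₀ (mul_pos hx hy)]
  calc |max y ε - max x ε| ≤ |y - x| := abs_max_sub_max_le_abs _ _ _
    _ = ε⁻¹ ^ 2 * |x - y| * (ε * ε) := by rw [abs_sub_comm]; field_simp
    _ ≤ ε⁻¹ ^ 2 * |x - y| * (max x ε * max y ε) := by
      gcongr <;> exact le_max_right _ _

theorem monotone_comp_sub_add_mul_add {φ : ℝ → ℝ} {K : ℝ}
    (hφ : ∀ x y, |φ x - φ y| ≤ K * |x - y|) {L₁ L₂ : ℝ → ℝ} (h₁ : Monotone L₁)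
    (h₂ : Monotone L₂) : Monotone fun x => φ (L₁ x - L₂ x) + K * (L₁ x + L₂ x) := by
  have hK : 0 ≤ K := by simpa using (abs_nonneg _).trans (hφ 1 0)
  intro x y hxy
  have hΔ : |(L₁ x - L₂ x) - (L₁ y - L₂ y)| ≤ (L₁ y - L₁ x) + (L₂ y - L₂ x) :=
    abs_le.2 ⟨by linarith [h₁ hxy, h₂ hxy], by linarith [h₁ hxy, h₂ hxy]⟩
  have := (hφ (L₁ x - L₂ x) (L₁ y - L₂ y)).trans (mul_le_mul_of_nonneg_left hΔ hK)
  dsimp only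
  linarith [le_abs_self (φ (L₁ x - L₂ x) - φ (L₁ y - L₂ y))]

theorem exists_monotone_tendsto_nhdsLT_sub {q : ℝ → ℝ} {a b : ℝ}
    (hq : ∃ q₁ q₂ : ℝ → ℝ, MonotoneOn q₁ (Icc a b) ∧ MonotoneOn q₂ (Icc a b) ∧
      ∀ t ∈ Icc a b, q t = q₁ t - q₂ t) :
    ∃ L₁ L₂ : ℝ → ℝ, Monotone L₁ ∧ Monotone L₂ ∧
      ∀ s ∈ Ioc a b, Tendsto q (𝓝[<] s) (𝓝 (L₁ s - L₂ s)) := by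
  obtain ⟨q₁, q₂, hq₁, hq₂, hq⟩ := hq
  have extend : ∀ {r : ℝ → ℝ}, MonotoneOn r (Icc a b) → ∃ R, Monotone R ∧ EqOn r R (Icc a b) :=
    fun {r} hr => hr.exists_monotone_extension
      ⟨r a, forall_mem_image.2 fun x hx => hr (left_mem_Icc.2 (hx.1.trans hx.2)) hx hx.1⟩
      ⟨r b, forall_mem_image.2 fun x hx => hr hx (right_mem_Icc.2 (hx.1.trans hx.2)) hx.2⟩
  obtain ⟨Q₁, hQ₁, hqQ₁⟩ := extend hq₁
  obtain ⟨Q₂, hQ₂, hqQ₂⟩ := extend hq₂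
  refine ⟨leftLim Q₁, leftLim Q₂, hQ₁.leftLim, hQ₂.leftLim, fun s hs => ?_⟩
  refine ((hQ₁.tendsto_leftLim s).sub (hQ₂.tendsto_leftLim s)).congr' ?_
  filter_upwards [Ioo_mem_nhdsLT hs.1] with x hx
  have hx' : x ∈ Icc a b := ⟨hx.1.le, hx.2.le.trans hs.2⟩
  rw [hq x hx', hqQ₁ hx', hqQ₂ hx']

theorem tendsto_ceil_sub_one_div_nhdsLT (x : ℝ) :
    Tendsto (fun k : ℕ => ((⌈(k + 1 : ℝ) * x⌉ : ℝ) - 1) / (k + 1)) atTop (𝓝[<] x) := by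
  have hbounds : ∀ k : ℕ, x - 1 / (k + 1) ≤ ((⌈(k + 1 : ℝ) * x⌉ : ℝ) - 1) / (k + 1) ∧
      ((⌈(k + 1 : ℝ) * x⌉ : ℝ) - 1) / (k + 1) < x := fun k => by
    have hk : (0 : ℝ) < k + 1 := by positivity
    rw [le_div_iff₀ hk, div_lt_iff₀ hk, sub_mul, div_mul_cancel₀ _ hk.ne']
    constructor <;> linarith [Int.le_ceil ((k + 1 : ℝ) * x), Int.ceil_lt_add_one ((k + 1 : ℝ) * x)]
  refine tendsto_nhdsWithin_iff.2 ⟨?_, Eventually.of_forall fun k => (hbounds k).2⟩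
  refine tendsto_of_tendsto_of_tendsto_of_le_of_le ?_ tendsto_const_nhds
    (fun k => (hbounds k).1) fun k => (hbounds k).2.le
  simpa using tendsto_const_nhds.sub (tendsto_one_div_add_atTop_nhds_zero_nat (𝕜 := ℝ))

theorem aemeasurable_leftLim {f : ℝ → ℝ} {s : Set ℝ} (μ : Measure ℝ) (hs : MeasurableSet s)
    (hf : ∀ x ∈ s, ∃ l, Tendsto f (𝓝[<] x) (𝓝 l)) : AEMeasurable (leftLim f) (μ.restrict s) := by
  -- Approach `x` from the left along the grid `ℤ / (k + 1)`: every approximant factors through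
  -- `⌈·⌉ : ℝ → ℤ`, hence is measurable whatever `f` is.
  refine aemeasurable_of_tendsto_metrizable_ae'
    (f := fun k x => f (((⌈(k + 1 : ℝ) * x⌉ : ℝ) - 1) / (k + 1))) (fun k => ?_) ?_
  · exact ((measurable_from_top (f := fun m : ℤ => f ((m - 1) / (k + 1)))).comp
      (Int.measurable_ceil.comp (measurable_const_mul _))).aemeasurable
  · refine (ae_restrict_iff' hs).2 (ae_of_all _ fun x hx => ?_)
    obtain ⟨l, hl⟩ := hf x hx
    rw [leftLim_eq_of_tendsto hl]
    exact hl.comp (tendsto_ceil_sub_one_div_nhdsLT x)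

theorem StieltjesFunction.abs_measureReal_sub_le_of_ordConnected (F G : StieltjesFunction ℝ)
    {θ d : ℝ} (hθ : 0 ≤ θ) (hd : ∀ x ∈ Icc 0 θ, |F x - G x| ≤ d) {T : Set ℝ}
    (hT : T.OrdConnected) (hTθ : T ⊆ Ioc 0 θ) :
    |F.measure.real T - G.measure.real T| ≤ 2 * d := by
  rcases T.eq_empty_or_nonempty with rfl | ⟨x, hx⟩
  · simpa using (abs_nonneg _).trans (hd 0 ⟨le_rfl, hθ⟩)
  have hL : ∀ y ∈ Ioc 0 θ, |leftLim F y - leftLim G y| ≤ d := fun y hy =>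
    abs_leftLim_sub_leftLim_le ⟨_, F.mono.tendsto_leftLim y⟩ ⟨_, G.mono.tendsto_leftLim y⟩
      (mem_of_superset (Ioo_mem_nhdsLT hy.1) fun z hz => hd z ⟨hz.1.le, hz.2.le.trans hy.2⟩)
  have hdiff : ∀ u v u' v', |u - u'| ≤ d → |v - v'| ≤ d →
      |max (u - v) 0 - max (u' - v') 0| ≤ 2 * d := fun u v u' v' h h' =>
    (abs_max_sub_max_le_abs _ _ _).trans <| by
      rw [sub_sub_sub_comm, two_mul]; exact (abs_sub _ _).trans (add_le_add h h')
  have hbdd : BddBelow T ∧ BddAbove T :=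
    ⟨⟨0, fun y hy => (hTθ hy).1.le⟩, ⟨θ, fun y hy => (hTθ hy).2⟩⟩
  have hT' := mem_Icc_Ico_Ioc_Ioo_of_subset_of_subset
    (IsConnected.Ioo_csInf_csSup_subset ⟨⟨x, hx⟩, hT.isPreconnected⟩ hbdd.1 hbdd.2)
    (subset_Icc_csInf_csSup hbdd.1 hbdd.2)
  have ha : sInf T ∈ Icc 0 θ :=
    ⟨le_csInf ⟨x, hx⟩ fun y hy => (hTθ hy).1.le, (csInf_le hbdd.1 hx).trans (hTθ hx).2⟩
  have hb : sSup T ∈ Ioc 0 θ :=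
    ⟨(hTθ hx).1.trans_le (le_csSup hbdd.2 hx), csSup_le ⟨x, hx⟩ fun y hy => (hTθ hy).2⟩
  generalize sInf T = a at hT' ha
  generalize sSup T = b at hT' hb
  have hmem : a ∈ T → a ∈ Ioc 0 θ := fun h => hTθ h
  rcases hT' with h | h | h | h <;> rw [h] at hx hmem ⊢ <;>
    simp only [measureReal_def, StieltjesFunction.measure_Icc, StieltjesFunction.measure_Ico,
      StieltjesFunction.measure_Ioc, StieltjesFunction.measure_Ioo, ENNReal.toReal_ofReal']
  · exact hdiff _ _ _ _ (hd _ ⟨hb.1.le, hb.2⟩) (hL _ (hmem ⟨le_rfl, hx.1.trans hx.2⟩))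
  · exact hdiff _ _ _ _ (hL _ hb) (hL _ (hmem ⟨le_rfl, hx.1.trans_lt hx.2⟩))
  · exact hdiff _ _ _ _ (hd _ ⟨hb.1.le, hb.2⟩) (hd _ ha)
  · exact hdiff _ _ _ _ (hL _ hb) (hd _ ha)

theorem Monotone.setIntegral_Ioc_eq_integral_meas_le {μ : Measure ℝ} [IsLocallyFiniteMeasure μ]
    {g : ℝ → ℝ} (hg : Monotone g) (a t : ℝ) :
    ∫ s in Ioc a t, g s ∂μ = g a * μ.real (Ioc a t)
      + ∫ y in Ioc 0 (g t - g a), μ.real ({s | y ≤ g s - g a} ∩ Ioc a t) := by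
  have hint : IntegrableOn g (Ioc a t) μ :=
    (hg.locallyIntegrable.integrableOn_isCompact isCompact_Icc).mono_set Ioc_subset_Icc_self
  have hbounds : ∀ᵐ s ∂μ.restrict (Ioc a t), 0 ≤ g s - g a ∧ g s - g a ≤ g t - g a :=
    (ae_restrict_iff' measurableSet_Ioc).2 <| ae_of_all _ fun s hs =>
      ⟨sub_nonneg.2 (hg hs.1.le), sub_le_sub_right (hg hs.2) _⟩
  have hlayer :=
    (hint.sub (integrableOn_const measure_Ioc_lt_top.ne)).integral_eq_integral_Ioc_meas_le
      (hbounds.mono fun s hs => hs.1) (hbounds.mono fun s hs => hs.2)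
  simp only [measureReal_restrict_apply' measurableSet_Ioc, Pi.sub_apply] at hlayer
  rw [← hlayer, integral_sub hint (integrableOn_const measure_Ioc_lt_top.ne), setIntegral_const,
    smul_eq_mul]
  ring

theorem StieltjesFunction.abs_setIntegral_sub_le_of_monotone (F G : StieltjesFunction ℝ)
    {θ d : ℝ} (hd : ∀ x ∈ Icc 0 θ, |F x - G x| ≤ d) {g : ℝ → ℝ} (hg : Monotone g) {t : ℝ}
    (ht : t ∈ Icc 0 θ) :
    |∫ s in Ioc 0 t, g s ∂F.measure - ∫ s in Ioc 0 t, g s ∂G.measure|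
      ≤ 2 * d * (|g 0| + (g θ - g 0)) := by
  have hθ : 0 ≤ θ := ht.1.trans ht.2
  have hd0 : 0 ≤ d := (abs_nonneg _).trans (hd 0 ⟨le_rfl, hθ⟩)
  set S : ℝ → Set ℝ := fun y => {s | y ≤ g s - g 0} ∩ Ioc 0 t
  have hS_ordConnected : ∀ y, (S y).OrdConnected := fun y =>
    ⟨fun x hx z hz w hw => ⟨hx.1.trans (sub_le_sub_right (hg hw.1) _),
      ⟨hx.2.1.trans_le hw.1, hw.2.trans hz.2.2⟩⟩⟩
  have hS : ∀ y, |F.measure.real (S y) - G.measure.real (S y)| ≤ 2 * d := fun y =>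
    F.abs_measureReal_sub_le_of_ordConnected G hθ hd (hS_ordConnected y)
      (inter_subset_right.trans (Ioc_subset_Ioc_right ht.2))
  have hI := F.abs_measureReal_sub_le_of_ordConnected G hθ hd ordConnected_Ioc
    (Ioc_subset_Ioc_right ht.2)
  have hint : ∀ H : StieltjesFunction ℝ,
      IntegrableOn (fun y => H.measure.real (S y)) (Ioc 0 (g t - g 0)) := fun H =>
    (AntitoneOn.integrableOn_isCompact isCompact_Icc fun y _ y' _ hyy' =>
      measureReal_mono (s₁ := S y') (fun s hs => ⟨hyy'.trans hs.1, hs.2⟩)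
        ((measure_mono inter_subset_right).trans_lt measure_Ioc_lt_top).ne).mono_set
      Ioc_subset_Icc_self
  have hM : 0 ≤ g t - g 0 := sub_nonneg.2 (hg ht.1)
  rw [hg.setIntegral_Ioc_eq_integral_meas_le, hg.setIntegral_Ioc_eq_integral_meas_le,
    add_sub_add_comm, ← mul_sub, ← integral_sub (hint F) (hint G)]
  calc _ ≤ |g 0 * (F.measure.real (Ioc 0 t) - G.measure.real (Ioc 0 t))|
        + |∫ y in Ioc 0 (g t - g 0), (F.measure.real (S y) - G.measure.real (S y))| :=
        abs_add_le _ _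
    _ ≤ |g 0| * (2 * d) + 2 * d * (g t - g 0) := by
      rw [abs_mul]
      refine add_le_add (mul_le_mul_of_nonneg_left hI (abs_nonneg _)) ?_
      simpa only [Real.volume_real_Ioc_of_le hM, Real.norm_eq_abs, sub_zero] using
        norm_setIntegral_le_of_norm_le_const (μ := volume) (s := Ioc 0 (g t - g 0))
          measure_Ioc_lt_top fun y _ => (Real.norm_eq_abs _).trans_le (hS y)
    _ ≤ 2 * d * (|g 0| + (g θ - g 0)) := by
      nlinarith [hg ht.2, abs_nonneg (g 0)]

theorem integrableOn_inv_max_leftLim {ε : ℝ} (hε : 0 < ε) {μ : Measure ℝ}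
    [IsLocallyFiniteMeasure μ] {p : ℝ → ℝ} {a b : ℝ}
    (hp : ∀ x ∈ Ioc a b, ∃ l, Tendsto p (𝓝[<] x) (𝓝 l)) :
    IntegrableOn (fun s => (max (leftLim p s) ε)⁻¹) (Ioc a b) μ := by
  have hcont : Continuous fun x : ℝ => (max x ε)⁻¹ :=
    (continuous_id.max continuous_const).inv₀ fun x => (hε.trans_le (le_max_right _ _)).ne'
  exact IntegrableOn.of_bound measure_Ioc_lt_top
    (hcont.measurable.comp_aemeasurable
      (aemeasurable_leftLim μ measurableSet_Ioc hp)).aestronglyMeasurable ε⁻¹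
    (ae_of_all _ fun s => abs_inv_max_le hε _)

theorem abs_setIntegral_inv_max_leftLim_sub_le {ε : ℝ} (hε : 0 < ε) {μ : Measure ℝ}
    [IsLocallyFiniteMeasure μ] {p q : ℝ → ℝ} {a b δ : ℝ}
    (hp : ∀ x ∈ Ioc a b, ∃ l, Tendsto p (𝓝[<] x) (𝓝 l))
    (hq : ∀ x ∈ Ioc a b, ∃ l, Tendsto q (𝓝[<] x) (𝓝 l))
    (hpq : ∀ x ∈ Ioc a b, |p x - q x| ≤ δ) :
    |∫ s in Ioc a b, (max (leftLim p s) ε)⁻¹ ∂μ - ∫ s in Ioc a b, (max (leftLim q s) ε)⁻¹ ∂μ|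
      ≤ ε⁻¹ ^ 2 * δ * μ.real (Ioc a b) := by
  rw [← integral_sub (integrableOn_inv_max_leftLim hε hp) (integrableOn_inv_max_leftLim hε hq)]
  refine (Real.norm_eq_abs _).symm.trans_le (norm_setIntegral_le_of_norm_le_const
    measure_Ioc_lt_top fun s hs => ?_)
  refine (abs_inv_max_sub_inv_max_le hε _ _).trans (mul_le_mul_of_nonneg_left ?_ (by positivity))
  exact abs_leftLim_sub_leftLim_le (hp s hs) (hq s hs) <| mem_of_superset (Ioo_mem_nhdsLT hs.1)
    fun x hx => hpq x ⟨hx.1, hx.2.le.trans hs.2⟩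

section UniformConvergence

variable {ι : Type*} {l : Filter ι} {θ : ℝ} {A : ι → StieltjesFunction ℝ}
  {Alim : StieltjesFunction ℝ}

theorem tendstoUniformlyOn_setIntegral_of_monotone
    (hA : TendstoUniformlyOn (fun n t => A n t) (fun t => Alim t) l (Icc 0 θ)) {g : ℝ → ℝ}
    (hg : Monotone g) :
    TendstoUniformlyOn (fun n t => ∫ s in Ioc 0 t, g s ∂(A n).measure)
      (fun t => ∫ s in Ioc 0 t, g s ∂Alim.measure) l (Icc 0 θ) := by
  refine tendstoUniformlyOn_of_eventually_dist_le_mul (2 * (|g 0| + (g θ - g 0))) fun d hd => ?_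
  filter_upwards [Metric.tendstoUniformlyOn_iff.1 hA d hd] with n hn t ht
  rw [Real.dist_eq, mul_right_comm]
  exact Alim.abs_setIntegral_sub_le_of_monotone (A n)
    (fun x hx => (Real.dist_eq _ _ ▸ hn x hx).le) hg ht

theorem tendstoUniformlyOn_setIntegral_of_eqOn_sub
    (hA : TendstoUniformlyOn (fun n t => A n t) (fun t => Alim t) l (Icc 0 θ))
    {f g₁ g₂ : ℝ → ℝ} (hg₁ : Monotone g₁) (hg₂ : Monotone g₂)
    (hf : EqOn f (g₁ - g₂) (Ioc 0 θ)) :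
    TendstoUniformlyOn (fun n t => ∫ s in Ioc 0 t, f s ∂(A n).measure)
      (fun t => ∫ s in Ioc 0 t, f s ∂Alim.measure) l (Icc 0 θ) := by
  have hsplit : ∀ (H : StieltjesFunction ℝ), ∀ t ∈ Icc 0 θ, ∫ s in Ioc 0 t, f s ∂H.measure
      = ∫ s in Ioc 0 t, g₁ s ∂H.measure - ∫ s in Ioc 0 t, g₂ s ∂H.measure := fun H t ht => by
    have hint : ∀ {g : ℝ → ℝ}, Monotone g → IntegrableOn g (Ioc 0 t) H.measure := fun hg =>
      (hg.locallyIntegrable.integrableOn_isCompact isCompact_Icc).mono_set Ioc_subset_Icc_self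
    rw [← integral_sub (hint hg₁) (hint hg₂)]
    exact setIntegral_congr_fun measurableSet_Ioc fun s hs =>
      hf (Ioc_subset_Ioc_right ht.2 hs)
  refine (((tendstoUniformlyOn_setIntegral_of_monotone hA hg₁).sub
    (tendstoUniformlyOn_setIntegral_of_monotone hA hg₂)).congr ?_).congr_right ?_
  · exact Eventually.of_forall fun n t ht => (hsplit (A n) t ht).symm
  · exact fun t ht => (hsplit Alim t ht).symm

theorem tendstoUniformlyOn_setIntegral_inv_max_leftLim_sub {ε : ℝ} (hε : 0 < ε)
    (hA : TendstoUniformlyOn (fun n t => A n t) (fun t => Alim t) l (Icc 0 θ))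
    {p : ι → ℝ → ℝ} {q : ℝ → ℝ} (hpq : TendstoUniformlyOn p q l (Icc 0 θ))
    (hp : ∀ n, ∀ x ∈ Ioc 0 θ, ∃ l, Tendsto (p n) (𝓝[<] x) (𝓝 l))
    (hq : ∀ x ∈ Ioc 0 θ, ∃ l, Tendsto q (𝓝[<] x) (𝓝 l)) :
    TendstoUniformlyOn
      (fun n t => ∫ s in Ioc 0 t, (max (leftLim (p n) s) ε)⁻¹ ∂(A n).measure
        - ∫ s in Ioc 0 t, (max (leftLim q s) ε)⁻¹ ∂(A n).measure) 0 l (Icc 0 θ) := by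
  refine tendstoUniformlyOn_of_eventually_dist_le_mul
    (ε⁻¹ ^ 2 * (Alim.measure.real (Ioc 0 θ) + 2)) fun δ hδ => ?_
  filter_upwards [Metric.tendstoUniformlyOn_iff.1 hA 1 one_pos,
    Metric.tendstoUniformlyOn_iff.1 hpq δ hδ] with n hAn hpn t ht
  have hsub : Ioc 0 t ⊆ Ioc 0 θ := Ioc_subset_Ioc_right ht.2
  have hmass : (A n).measure.real (Ioc 0 t) ≤ Alim.measure.real (Ioc 0 θ) + 2 := by
    have := Alim.abs_measureReal_sub_le_of_ordConnected (A n) (ht.1.trans ht.2)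
      (fun x hx => (Real.dist_eq _ _ ▸ hAn x hx).le) ordConnected_Ioc subset_rfl
    linarith [(abs_le.1 this).1, measureReal_mono hsub (μ := (A n).measure) measure_Ioc_lt_top.ne]
  rw [Pi.zero_apply, dist_zero_left, Real.norm_eq_abs]
  calc _ ≤ ε⁻¹ ^ 2 * δ * (A n).measure.real (Ioc 0 t) :=
        abs_setIntegral_inv_max_leftLim_sub_le hε (fun x hx => hp n x (hsub hx))
          (fun x hx => hq x (hsub hx)) fun x hx => by
            rw [abs_sub_comm, ← Real.dist_eq]; exact (hpn x (Ioc_subset_Icc_self (hsub hx))).le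
    _ ≤ ε⁻¹ ^ 2 * (Alim.measure.real (Ioc 0 θ) + 2) * δ := by
      rw [mul_right_comm]; gcongr

end UniformConvergence

theorem conditional_nelson_aalen_uniform_consistency_general
    (θ : ℝ) (ε : ℝ) (hε : 0 < ε)
    (A : ℕ → StieltjesFunction ℝ)
    (Alim : StieltjesFunction ℝ)
    (p : ℕ → ℝ → ℝ)
    (hpll : ∀ n, ∀ t ∈ Ioc (0:ℝ) θ, ∃ l : ℝ, Tendsto (p n) (𝓝[<] t) (𝓝 l))
    (q : ℝ → ℝ)
    (hqbv : ∃ q₁ q₂ : ℝ → ℝ, MonotoneOn q₁ (Icc 0 θ) ∧ MonotoneOn q₂ (Icc 0 θ) ∧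
      ∀ t ∈ Icc (0:ℝ) θ, q t = q₁ t - q₂ t)
    (hAconv : TendstoUniformlyOn (fun n t => A n t) (fun t => Alim t) atTop (Icc 0 θ))
    (hpconv : TendstoUniformlyOn p q atTop (Icc 0 θ)) :
    TendstoUniformlyOn
      (fun n t => ∫ s in Ioc (0:ℝ) t, (max (Function.leftLim (p n) s) ε)⁻¹ ∂(A n).measure)
      (fun t => ∫ s in Ioc (0:ℝ) t, (max (Function.leftLim q s) ε)⁻¹ ∂Alim.measure)
      atTop (Icc 0 θ) := by
  obtain ⟨L₁, L₂, hL₁, hL₂, hqL⟩ := exists_monotone_tendsto_nhdsLT_sub hqbv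
  -- Jordan decomposition of `s ↦ (q(s−) ∨ ε)⁻¹`, an `ε⁻²`-Lipschitz function of `L₁ - L₂`.
  have hq_limit := tendstoUniformlyOn_setIntegral_of_eqOn_sub
    (f := fun s => (max (leftLim q s) ε)⁻¹) hAconv
    (monotone_comp_sub_add_mul_add (abs_inv_max_sub_inv_max_le hε) hL₁ hL₂)
    ((hL₁.add hL₂).const_mul (by positivity : 0 ≤ ε⁻¹ ^ 2)) fun s hs => by
      simp only [leftLim_eq_of_tendsto (hqL s hs), Pi.sub_apply, add_sub_cancel_right]
  have hp_close := tendstoUniformlyOn_setIntegral_inv_max_leftLim_sub hε hAconv hpconv hpll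
    fun s hs => ⟨_, hqL s hs⟩
  simpa using hp_close.fun_add hq_limit

/-- Deterministic core of the strong uniform consistency of the perturbed conditional
Nelson–Aalen estimator: if `A_n → A` uniformly on `[0,θ]` (nondecreasing, right-continuous,
vanishing at `0`) and `p_n → p` uniformly on `[0,θ]` (càdlàg with values in `[0,1]`, the
limit `p` right-continuous and of bounded variation), then
`t ↦ ∫_{(0,t]} (p_n(s−) ∨ ε)⁻¹ μ_{A_n}(ds)` converges to
`t ↦ ∫_{(0,t]} (p(s−) ∨ ε)⁻¹ μ_A(ds)` uniformly on `[0,θ]`. -/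
theorem conditional_nelson_aalen_uniform_consistency
    (θ : ℝ) (hθ : 0 < θ) (ε : ℝ) (hε : 0 < ε) (hε1 : ε ≤ 1)
    (A : ℕ → StieltjesFunction ℝ) (hA0 : ∀ n, A n 0 = 0)
    (Alim : StieltjesFunction ℝ) (hAlim0 : Alim 0 = 0)
    (p : ℕ → ℝ → ℝ)
    (hp01 : ∀ n, ∀ t ∈ Icc (0:ℝ) θ, p n t ∈ Icc (0:ℝ) 1)
    (hprc : ∀ n, ∀ t ∈ Ico (0:ℝ) θ, Tendsto (p n) (𝓝[≥] t) (𝓝 (p n t)))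
    (hpll : ∀ n, ∀ t ∈ Ioc (0:ℝ) θ, ∃ l : ℝ, Tendsto (p n) (𝓝[<] t) (𝓝 l))
    (q : ℝ → ℝ)
    (hq01 : ∀ t ∈ Icc (0:ℝ) θ, q t ∈ Icc (0:ℝ) 1)
    (hqrc : ∀ t ∈ Ico (0:ℝ) θ, Tendsto q (𝓝[≥] t) (𝓝 (q t)))
    (hqbv : ∃ q₁ q₂ : ℝ → ℝ, MonotoneOn q₁ (Icc 0 θ) ∧ MonotoneOn q₂ (Icc 0 θ) ∧
      ∀ t ∈ Icc (0:ℝ) θ, q t = q₁ t - q₂ t)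
    (hAconv : TendstoUniformlyOn (fun n t => A n t) (fun t => Alim t) atTop (Icc 0 θ))
    (hpconv : TendstoUniformlyOn p q atTop (Icc 0 θ)) :
    TendstoUniformlyOn
      (fun n t => ∫ s in Ioc (0:ℝ) t, (max (Function.leftLim (p n) s) ε)⁻¹ ∂(A n).measure)
      (fun t => ∫ s in Ioc (0:ℝ) t, (max (Function.leftLim q s) ε)⁻¹ ∂Alim.measure)
      atTop (Icc 0 θ) :=
  conditional_nelson_aalen_uniform_consistency_general θ ε hε A Alim p hpll q hqbv hAconv hpconv
end

section
/- Let d ≥ 1 and x ∈ ℝ^d. Let K : ℝ^d → ℝ be an integrable function with compact support such that ∫_{ℝ^d} K(u) λ(du) = 1 and ∫_{ℝ^d} u_i K(u) λ(du) = 0 for every coordinate i ∈ {1, …, d}. Let f : ℝ^d → ℝ be measurable, and suppose f is twice continuously differentiable on an open neighborhood U of x with all second-order partial derivatives bounded in absolute value by M on U. Then there exist constants C ≥ 0 and a₀ > 0 such that for all 0 < a < a₀: | a^{−d} ∫_{ℝ^d} K( (x − u)/a ) f(u) λ(du) − f(x) | ≤ C a². -/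
open MeasureTheory Metric

/-!
The substitution `u = x - a • v` turns the smoothed value into `∫ K v * f (x - a • v) dv`.
Because `∫ K = 1` and `K` annihilates every linear functional, subtracting `f x` leaves the
integral of `K v` against the first-order Taylor remainder of `f` at `x - a • v`. If the support
of `K` lies in the ball of radius `R`, that point stays within `a * R` of `x`, where the bound on
the second derivative makes the remainder at most `M * (a * R) ^ 2`.
-/

section Taylor

variable {E F : Type*} [NormedAddCommGroup E] [NormedSpace ℝ E] [NormedAddCommGroup F]
  [NormedSpace ℝ F] {f : E → F} {s U : Set E} {x y : E} {M : ℝ}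

theorem Convex.norm_fderiv_sub_le_of_norm_iteratedFDerivWithin_two_le (hs : Convex ℝ s)
    (hU : IsOpen U) (hsU : s ⊆ U) (hf : ContDiffOn ℝ 2 f U)
    (hM : ∀ u ∈ U, ‖iteratedFDerivWithin ℝ 2 f U u‖ ≤ M) (hx : x ∈ s) (hy : y ∈ s) :
    ‖fderiv ℝ f y - fderiv ℝ f x‖ ≤ M * ‖y - x‖ := by
  have hdiff : DifferentiableOn ℝ (fderiv ℝ f) U :=
    (hf.fderiv_of_isOpen hU (m := 1) (by norm_num)).differentiableOn one_ne_zero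
  refine hs.norm_image_sub_le_of_norm_fderiv_le
    (fun z hz => (hdiff z (hsU hz)).differentiableAt (hU.mem_nhds (hsU hz))) (fun z hz => ?_) hx hy
  rw [← norm_iteratedFDeriv_one, norm_iteratedFDeriv_fderiv,
    ← iteratedFDerivWithin_of_isOpen 2 hU (hsU hz)]
  exact hM z (hsU hz)

theorem Convex.norm_image_sub_sub_fderiv_le (hs : Convex ℝ s)
    (hf : ∀ z ∈ s, DifferentiableAt ℝ f z) (hM : 0 ≤ M)
    (hlip : ∀ z ∈ s, ‖fderiv ℝ f z - fderiv ℝ f x‖ ≤ M * ‖z - x‖) (hx : x ∈ s) (hy : y ∈ s) :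
    ‖f y - f x - fderiv ℝ f x (y - x)‖ ≤ M * ‖y - x‖ ^ 2 := by
  have hseg := hs.segment_subset hx hy
  calc _ ≤ M * ‖y - x‖ * ‖y - x‖ :=
        (convex_segment x y).norm_image_sub_le_of_norm_fderiv_le' (fun z hz => hf z (hseg hz))
          (fun z hz => (hlip z (hseg hz)).trans
            (mul_le_mul_of_nonneg_left (norm_sub_le_of_mem_segment hz) hM))
          (left_mem_segment ℝ x y) (right_mem_segment ℝ x y)
    _ = _ := by ring

theorem Convex.norm_image_sub_sub_fderiv_le_of_contDiffOn_two (hs : Convex ℝ s)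
    (hU : IsOpen U) (hsU : s ⊆ U) (hf : ContDiffOn ℝ 2 f U)
    (hM : ∀ u ∈ U, ‖iteratedFDerivWithin ℝ 2 f U u‖ ≤ M) (hx : x ∈ s) (hy : y ∈ s) :
    ‖f y - f x - fderiv ℝ f x (y - x)‖ ≤ M * ‖y - x‖ ^ 2 :=
  hs.norm_image_sub_sub_fderiv_le
    (fun z hz => (hf.differentiableOn two_ne_zero z (hsU hz)).differentiableAt
      (hU.mem_nhds (hsU hz)))
    ((norm_nonneg _).trans (hM x (hsU hx)))
    (fun _ hz => hs.norm_fderiv_sub_le_of_norm_iteratedFDerivWithin_two_le hU hsU hf hM hx hz)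
    hx hy

end Taylor

theorem MeasureTheory.Integrable.mul_of_continuousOn_tsupport {X R : Type*} [TopologicalSpace X]
    [T2Space X] [MeasurableSpace X] [OpensMeasurableSpace X] [NormedRing R]
    [SecondCountableTopologyEither X R] {μ : Measure X} {K g : X → R} (hK : Integrable K μ)
    (hKsupp : HasCompactSupport K) (hg : ContinuousOn g (tsupport K)) :
    Integrable (fun v => K v * g v) μ :=
  (integrableOn_iff_integrable_of_support_subset
    ((Function.support_mul_subset_left _ _).trans (subset_tsupport K))).1
    (hK.integrableOn.mul_continuousOn hg hKsupp)

theorem MeasureTheory.Measure.integral_eq_pow_finrank_smul_integral_comp_sub_smul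
    {E F : Type*} [NormedAddCommGroup E] [NormedSpace ℝ E] [MeasurableSpace E] [BorelSpace E]
    [FiniteDimensional ℝ E] [NormedAddCommGroup F] [NormedSpace ℝ F] (μ : Measure E)
    [μ.IsAddHaarMeasure] (φ : E → F) (x : E) {a : ℝ} (ha : 0 < a) :
    ∫ u, φ u ∂μ = a ^ Module.finrank ℝ E • ∫ v, φ (x - a • v) ∂μ := by
  rw [μ.integral_comp_smul (fun w => φ (x - w)) a, integral_sub_left_eq_self,
    abs_of_pos (by positivity), smul_smul, mul_inv_cancel₀ (by positivity), one_smul]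

section Kernel

variable {ι : Type*} [Fintype ι] {K : EuclideanSpace ℝ ι → ℝ}

theorem integral_mul_clm_eq_zero_of_moments (hK : Integrable K) (hKsupp : HasCompactSupport K)
    (hmom : ∀ i, ∫ u : EuclideanSpace ℝ ι, u i * K u = 0) (L : EuclideanSpace ℝ ι →L[ℝ] ℝ) :
    ∫ u, K u * L u = 0 := by
  classical
  have hL : ∀ u : EuclideanSpace ℝ ι,
      K u * L u = ∑ i, L (EuclideanSpace.single i 1) * (K u * u i) := by
    intro u
    have hrepr : L u = ∑ i, u i * L (EuclideanSpace.single i 1) := by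
      conv_lhs => rw [← (EuclideanSpace.basisFun ι ℝ).sum_repr u]
      simp [map_sum]
    rw [hrepr, Finset.mul_sum]
    exact Finset.sum_congr rfl fun i _ => by ring
  have hmom' : ∀ i, ∫ u : EuclideanSpace ℝ ι, K u * u i = 0 := by
    simpa only [mul_comm] using hmom
  simp_rw [hL]
  rw [integral_finsetSum _ fun i _ => (hK.mul_of_continuousOn_tsupport hKsupp
    (PiLp.continuous_apply 2 _ i).continuousOn).const_mul _]
  simp [integral_const_mul, hmom']

theorem integral_mul_comp_sub_smul_sub_eq (hK : Integrable K) (hKsupp : HasCompactSupport K)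
    (hKone : ∫ u, K u = 1) (hmom : ∀ i, ∫ u : EuclideanSpace ℝ ι, u i * K u = 0)
    {g : EuclideanSpace ℝ ι → ℝ} {x : EuclideanSpace ℝ ι} (L : EuclideanSpace ℝ ι →L[ℝ] ℝ)
    (a : ℝ) (hKg : Integrable (fun v => K v * g (x - a • v))) :
    (∫ v, K v * g (x - a • v)) - g x
      = ∫ v, K v * (g (x - a • v) - g x - L (x - a • v - x)) := by
  have hlin : ∀ v, K v * (g (x - a • v) - g x - L (x - a • v - x))
      = K v * g (x - a • v) - K v * g x + a * (K v * L v) := by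
    intro v
    rw [sub_sub_cancel_left, map_neg, map_smul, smul_eq_mul]
    ring
  have hKg' : Integrable (fun v => K v * g (x - a • v) - K v * g x) := hKg.sub (hK.mul_const _)
  have hKL : Integrable (fun v => K v * L v) :=
    hK.mul_of_continuousOn_tsupport hKsupp L.continuous.continuousOn
  simp_rw [hlin]
  rw [integral_add hKg' (hKL.const_mul a), integral_sub hKg (hK.mul_const _), integral_mul_const,
    hKone, integral_const_mul, integral_mul_clm_eq_zero_of_moments hK hKsupp hmom L]
  ring

theorem abs_integral_mul_comp_sub_smul_sub_le (hK : Integrable K) (hKsupp : HasCompactSupport K)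
    (hKone : ∫ u, K u = 1) (hmom : ∀ i, ∫ u : EuclideanSpace ℝ ι, u i * K u = 0) {R : ℝ}
    (hKR : ∀ v ∈ tsupport K, ‖v‖ ≤ R) {g : EuclideanSpace ℝ ι → ℝ} {x : EuclideanSpace ℝ ι}
    (L : EuclideanSpace ℝ ι →L[ℝ] ℝ) {a ε : ℝ} (ha : 0 ≤ a)
    (hg : ContinuousOn g (closedBall x (a * R)))
    (hrem : ∀ y ∈ closedBall x (a * R), |g y - g x - L (y - x)| ≤ ε) :
    |(∫ v, K v * g (x - a • v)) - g x| ≤ ε * ∫ v, |K v| := by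
  have hmaps : ∀ v ∈ tsupport K, x - a • v ∈ closedBall x (a * R) := by
    intro v hv
    rw [mem_closedBall, dist_eq_norm, sub_sub_cancel_left, norm_neg, norm_smul,
      Real.norm_of_nonneg ha]
    exact mul_le_mul_of_nonneg_left (hKR v hv) ha
  have hKg : Integrable (fun v => K v * g (x - a • v)) :=
    hK.mul_of_continuousOn_tsupport hKsupp (hg.comp (by fun_prop) hmaps)
  rw [integral_mul_comp_sub_smul_sub_eq hK hKsupp hKone hmom L a hKg, ← Real.norm_eq_abs,
    ← integral_const_mul]
  refine norm_integral_le_of_norm_le (hK.abs.const_mul ε) (ae_of_all _ fun v => ?_)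
  by_cases hv : K v = 0
  · simp [hv]
  rw [norm_mul, Real.norm_eq_abs, Real.norm_eq_abs, mul_comm]
  exact mul_le_mul_of_nonneg_right (hrem _ (hmaps v (subset_tsupport K hv))) (abs_nonneg _)

end Kernel

theorem kernel_bias_bound_general (d : ℕ)
    (x : EuclideanSpace ℝ (Fin d))
    (K : EuclideanSpace ℝ (Fin d) → ℝ)
    (hKint : Integrable K) (hKsupp : HasCompactSupport K)
    (hKone : ∫ u, K u = 1)
    (hKmom : ∀ i : Fin d, ∫ u : EuclideanSpace ℝ (Fin d), u i * K u = 0)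
    (f : EuclideanSpace ℝ (Fin d) → ℝ)
    (U : Set (EuclideanSpace ℝ (Fin d))) (hU : IsOpen U) (hxU : x ∈ U)
    (hf : ContDiffOn ℝ 2 f U)
    (M : ℝ) (hM : ∀ u ∈ U, ‖iteratedFDerivWithin ℝ 2 f U u‖ ≤ M) :
    ∃ C : ℝ, 0 ≤ C ∧ ∃ a₀ : ℝ, 0 < a₀ ∧ ∀ a : ℝ, 0 < a → a < a₀ →
      |(a ^ d)⁻¹ * (∫ u, K (a⁻¹ • (x - u)) * f u) - f x| ≤ C * a ^ 2 := by
  obtain ⟨R, hR, hKR⟩ := hKsupp.isBounded.exists_pos_norm_le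
  obtain ⟨ρ, hρ, hρU⟩ := nhds_basis_closedBall.mem_iff.1 (hU.mem_nhds hxU)
  have hM0 : 0 ≤ M := (norm_nonneg _).trans (hM x hxU)
  refine ⟨M * R ^ 2 * ∫ v, |K v|, by positivity, ρ / R, by positivity, fun a ha haρ => ?_⟩
  have hball : closedBall x (a * R) ⊆ U :=
    (closedBall_subset_closedBall ((lt_div_iff₀ hR).1 haρ).le).trans hρU
  have hrem : ∀ y ∈ closedBall x (a * R),
      |f y - f x - fderiv ℝ f x (y - x)| ≤ M * (a * R) ^ 2 := fun y hy => by
    rw [← Real.norm_eq_abs]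
    refine ((convex_closedBall x _).norm_image_sub_sub_fderiv_le_of_contDiffOn_two hU hball hf hM
      (mem_closedBall_self (by positivity)) hy).trans ?_
    gcongr
    exact mem_closedBall_iff_norm.1 hy
  rw [volume.integral_eq_pow_finrank_smul_integral_comp_sub_smul _ x ha,
    finrank_euclideanSpace_fin, smul_eq_mul, inv_mul_cancel_left₀ (pow_ne_zero d ha.ne')]
  simp only [sub_sub_cancel, smul_smul, inv_mul_cancel₀ ha.ne', one_smul]
  calc _ ≤ M * (a * R) ^ 2 * ∫ v, |K v| :=
        abs_integral_mul_comp_sub_smul_sub_le hKint hKsupp hKone hKmom hKR (fderiv ℝ f x) ha.le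
          (hf.continuousOn.mono hball) hrem
    _ = _ := by ring

/-- Kernel bias bound: for an integrable, compactly supported kernel `K` on `ℝ^d` with
`∫ K = 1` and vanishing first moments `∫ uᵢ K(u) du = 0`, and `f` measurable and `C²` on a
neighborhood `U` of `x` with second derivative bounded by `M` there, the smoothing bias
satisfies `|a^{−d} ∫ K((x−u)/a) f(u) du − f(x)| ≤ C a²` for all sufficiently small `a > 0`. -/
theorem kernel_bias_bound (d : ℕ) (hd : 1 ≤ d)
    (x : EuclideanSpace ℝ (Fin d))
    (K : EuclideanSpace ℝ (Fin d) → ℝ)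
    (hKint : Integrable K) (hKsupp : HasCompactSupport K)
    (hKone : ∫ u, K u = 1)
    (hKmom : ∀ i : Fin d, ∫ u : EuclideanSpace ℝ (Fin d), u i * K u = 0)
    (f : EuclideanSpace ℝ (Fin d) → ℝ) (hfmeas : Measurable f)
    (U : Set (EuclideanSpace ℝ (Fin d))) (hU : IsOpen U) (hxU : x ∈ U)
    (hf : ContDiffOn ℝ 2 f U)
    (M : ℝ) (hM : ∀ u ∈ U, ‖iteratedFDerivWithin ℝ 2 f U u‖ ≤ M) :
    ∃ C : ℝ, 0 ≤ C ∧ ∃ a₀ : ℝ, 0 < a₀ ∧ ∀ a : ℝ, 0 < a → a < a₀ →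
      |(a ^ d)⁻¹ * (∫ u, K (a⁻¹ • (x - u)) * f u) - f x| ≤ C * a ^ 2 :=
  kernel_bias_bound_general d x K hKint hKsupp hKone hKmom f U hU hxU hf M hM
end

section
/- Let (X, Y) be a random vector with values in ℝ^d × ℝ on a probability space, with E[Y²] < ∞, and let (X^1, Y^1), …, (X^n, Y^n) be i.i.d. copies of (X, Y). Fix x ∈ ℝ^d, r > 0 and M ≥ 0, and assume that E[ Y² · 1{X ∈ A} ] ≤ M λ(A) for every Borel set A contained in the open ball B(x, r). Let K : ℝ^d → ℝ be bounded and measurable with support contained in the closed ball of radius ρ > 0 centered at the origin. Then for every a with 0 < a < r/ρ: Var( n^{−1} Σ_{ℓ=1}^n Y^ℓ · a^{−d} K( (x − X^ℓ)/a ) ) ≤ M ( ∫_{ℝ^d} K(u)² λ(du) ) / ( n a^d ). -/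
/-!
The summands are i.i.d. and square integrable, so the variance of their mean is `Var Z / n`,
which is at most `E[Z²] / n`. The hypothesis says that the measure `A ↦ E[Y² 1{X ∈ A}]` is
dominated by `M λ` on `B(x, r)`, and `u ↦ K((x - u)/a)` is supported in the closed ball of
radius `a ρ < r`, so `E[Y² K((x - X)/a)²] ≤ M ∫ K((x - u)/a)² du = M a^d ∫ K²`.
-/

open MeasureTheory ProbabilityTheory

open scoped ENNReal

section LocalizedMoment

variable {Ω E : Type*} [MeasurableSpace Ω] [MeasurableSpace E] {μ : Measure Ω} {ν : Measure E}
  {X : Ω → E} {Y : Ω → ℝ} {S : Set E} {M : ℝ}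

lemma integrable_of_bound_of_support_subset {F : Type*} [NormedAddCommGroup F] {f : E → F}
    {C : ℝ} (hS : ν S ≠ ∞) (hf : AEStronglyMeasurable f ν) (hfC : ∀ u, ‖f u‖ ≤ C)
    (hfS : Function.support f ⊆ S) : Integrable f ν :=
  (integrableOn_iff_integrable_of_support_subset hfS).1
    (Measure.integrableOn_of_bounded hS hf (ae_of_all _ hfC))

lemma restrict_map_withDensity_sq_le (hX : Measurable X) (hY : MemLp Y 2 μ) (hM : 0 ≤ M)
    (hS : MeasurableSet S)
    (hmom : ∀ A, MeasurableSet A → A ⊆ S → ∫ ω in X ⁻¹' A, Y ω ^ 2 ∂μ ≤ M * (ν A).toReal) :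
    ((μ.withDensity fun ω => ENNReal.ofReal (Y ω ^ 2)).map X).restrict S
      ≤ (ENNReal.ofReal M • ν).restrict S := by
  refine Measure.le_iff.2 fun A hA => ?_
  have hAS : MeasurableSet (A ∩ S) := hA.inter hS
  rw [Measure.restrict_apply hA, Measure.restrict_apply hA, Measure.map_apply hX hAS,
    withDensity_apply _ (hX hAS), Measure.smul_apply, smul_eq_mul,
    ← ofReal_integral_eq_lintegral_ofReal hY.integrable_sq.integrableOn
      (ae_of_all _ fun ω => sq_nonneg _)]
  calc ENNReal.ofReal (∫ ω in X ⁻¹' (A ∩ S), Y ω ^ 2 ∂μ)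
      ≤ ENNReal.ofReal (M * (ν (A ∩ S)).toReal) :=
        ENNReal.ofReal_le_ofReal (hmom _ hAS Set.inter_subset_right)
    _ ≤ ENNReal.ofReal M * ν (A ∩ S) := by
        rw [ENNReal.ofReal_mul hM]
        gcongr
        exact ENNReal.ofReal_toReal_le

lemma integral_sq_mul_comp_le (hX : Measurable X) (hY : MemLp Y 2 μ) (hM : 0 ≤ M)
    (hS : MeasurableSet S)
    (hmom : ∀ A, MeasurableSet A → A ⊆ S → ∫ ω in X ⁻¹' A, Y ω ^ 2 ∂μ ≤ M * (ν A).toReal)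
    {g : E → ℝ} (hg : Measurable g) (hg0 : 0 ≤ g) (hgν : Integrable g ν)
    (hgS : Function.support g ⊆ S) :
    ∫ ω, Y ω ^ 2 * g (X ω) ∂μ ≤ M * ∫ u, g u ∂ν := by
  have hgS' : Function.support (fun u => ENNReal.ofReal (g u)) ⊆ S := fun u hu =>
    hgS fun h => hu (by simp [h])
  have hlin : ∫⁻ ω, ENNReal.ofReal (Y ω ^ 2 * g (X ω)) ∂μ
      ≤ ENNReal.ofReal (M * ∫ u, g u ∂ν) := calc
    ∫⁻ ω, ENNReal.ofReal (Y ω ^ 2 * g (X ω)) ∂μ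
        = ∫⁻ u, ENNReal.ofReal (g u) ∂(μ.withDensity fun ω => ENNReal.ofReal (Y ω ^ 2)).map X := by
      rw [lintegral_map hg.ennreal_ofReal hX, lintegral_withDensity_eq_lintegral_mul₀
        (hY.1.aemeasurable.pow_const 2).ennreal_ofReal
        (g := fun ω => ENNReal.ofReal (g (X ω))) (by fun_prop)]
      simp only [Pi.mul_apply, ENNReal.ofReal_mul (sq_nonneg _)]
    _ = ∫⁻ u in S, ENNReal.ofReal (g u) ∂(μ.withDensity fun ω => ENNReal.ofReal (Y ω ^ 2)).map X :=
      (setLIntegral_eq_of_support_subset hgS').symm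
    _ ≤ ∫⁻ u in S, ENNReal.ofReal (g u) ∂(ENNReal.ofReal M • ν) :=
      lintegral_mono' (restrict_map_withDensity_sq_le hX hY hM hS hmom) le_rfl
    _ ≤ ENNReal.ofReal M * ∫⁻ u, ENNReal.ofReal (g u) ∂ν := by
      rw [Measure.restrict_smul, lintegral_smul_measure, smul_eq_mul]
      gcongr
      exact Measure.restrict_le_self
    _ = ENNReal.ofReal (M * ∫ u, g u ∂ν) := by
      rw [← ofReal_integral_eq_lintegral_ofReal hgν (ae_of_all _ hg0), ENNReal.ofReal_mul hM]
  rw [integral_eq_lintegral_of_nonneg_ae (ae_of_all _ fun ω => mul_nonneg (sq_nonneg _) (hg0 _))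
    ((hY.1.pow 2).mul (hg.comp hX).aestronglyMeasurable)]
  exact ENNReal.toReal_le_of_le_ofReal (mul_nonneg hM (integral_nonneg hg0)) hlin

end LocalizedMoment

section Kernel

variable {E : Type*} [NormedAddCommGroup E] [NormedSpace ℝ E]

lemma support_comp_inv_smul_sub_subset {K : E → ℝ} {ρ a : ℝ} (ha : 0 < a)
    (hK : Function.support K ⊆ Metric.closedBall 0 ρ) (x : E) :
    Function.support (fun u => K (a⁻¹ • (x - u))) ⊆ Metric.closedBall x (a * ρ) := by
  intro u hu
  have h := hK hu
  rw [mem_closedBall_zero_iff, norm_smul, norm_inv, Real.norm_of_nonneg ha.le,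
    inv_mul_le_iff₀ ha] at h
  rwa [Metric.mem_closedBall, dist_comm, dist_eq_norm]

variable [MeasurableSpace E] [BorelSpace E] [FiniteDimensional ℝ E] (ν : Measure E)
  [ν.IsAddHaarMeasure]

lemma integral_comp_inv_smul_sub (f : E → ℝ) (x : E) (a : ℝ) :
    ∫ u, f (a⁻¹ • (x - u)) ∂ν = |a ^ Module.finrank ℝ E| * ∫ u, f u ∂ν := by
  rw [integral_sub_left_eq_self (fun v => f (a⁻¹ • v)) ν x, Measure.integral_comp_inv_smul,
    smul_eq_mul]

variable {Ω : Type*} [MeasurableSpace Ω] {μ : Measure Ω} {X : Ω → E} {Y : Ω → ℝ} {M : ℝ}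
  {K : E → ℝ} {ρ a : ℝ} {x : E}

lemma integral_sq_mul_kernel_le (hX : Measurable X) (hY : MemLp Y 2 μ) (hM : 0 ≤ M)
    (hK : Measurable K) (hK2 : Integrable (fun u => K u ^ 2) ν)
    (hKsupp : Function.support K ⊆ Metric.closedBall 0 ρ) (ha : 0 < a)
    (hmom : ∀ A, MeasurableSet A → A ⊆ Metric.closedBall x (a * ρ) →
      ∫ ω in X ⁻¹' A, Y ω ^ 2 ∂μ ≤ M * (ν A).toReal) :
    ∫ ω, (Y ω * K (a⁻¹ • (x - X ω))) ^ 2 ∂μ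
      ≤ M * (a ^ Module.finrank ℝ E * ∫ u, K u ^ 2 ∂ν) := by
  have hgS : Function.support (fun u => K (a⁻¹ • (x - u)) ^ 2) ⊆ Metric.closedBall x (a * ρ) :=
    (Function.support_pow _ two_ne_zero).subset.trans
      (support_comp_inv_smul_sub_subset ha hKsupp x)
  have hgν : Integrable (fun u => K (a⁻¹ • (x - u)) ^ 2) ν :=
    (hK2.comp_smul (inv_ne_zero ha.ne')).comp_sub_left x
  have h := integral_sq_mul_comp_le hX hY hM Metric.isClosed_closedBall.measurableSet hmom
    (g := fun u => K (a⁻¹ • (x - u)) ^ 2) (by fun_prop) (fun u => sq_nonneg _) hgν hgS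
  rw [integral_comp_inv_smul_sub ν (fun u => K u ^ 2), abs_of_pos (pow_pos ha _)] at h
  simpa only [mul_pow] using h

end Kernel

section Mean

variable {Ω ι : Type*} [MeasurableSpace Ω] {μ : Measure Ω} [Fintype ι]

lemma variance_mean_eq_of_identDistrib {Z : ι → Ω → ℝ} {Z₀ : Ω → ℝ}
    (hindep : Pairwise fun i j => IndepFun (Z i) (Z j) μ)
    (hident : ∀ i, IdentDistrib (Z i) Z₀ μ μ) (hZ₀ : MemLp Z₀ 2 μ) :
    variance (fun ω => (Fintype.card ι : ℝ)⁻¹ * ∑ i, Z i ω) μ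
      = variance Z₀ μ / Fintype.card ι := by
  have hsum : variance (∑ i, Z i) μ = Fintype.card ι * variance Z₀ μ := by
    rw [IndepFun.variance_sum (fun i _ => (hident i).symm.memLp_snd hZ₀)
      (fun i _ j _ hij => hindep hij)]
    simp [(hident _).variance_eq]
  have := variance_const_mul (Fintype.card ι : ℝ)⁻¹ (∑ i, Z i) μ
  simp only [Finset.sum_apply] at this
  rw [this, hsum]
  rcases eq_or_ne (Fintype.card ι : ℝ) 0 with h | h
  · simp [h]
  · field_simp

end Mean

theorem nadaraya_watson_variance_bound_general
    {Ω : Type*} [MeasurableSpace Ω] (μ : Measure Ω) [IsProbabilityMeasure μ]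
    (d : ℕ) (n : ℕ)
    (X : Ω → EuclideanSpace ℝ (Fin d)) (Y : Ω → ℝ)
    (hX : Measurable X) (hY2 : MemLp Y 2 μ)
    (Xl : Fin n → Ω → EuclideanSpace ℝ (Fin d)) (Yl : Fin n → Ω → ℝ)
    (hindep : iIndepFun
      (fun ℓ ω => (Xl ℓ ω, Yl ℓ ω)) μ)
    (hident : ∀ ℓ : Fin n,
      IdentDistrib (fun ω => (Xl ℓ ω, Yl ℓ ω)) (fun ω => (X ω, Y ω)) μ μ)
    (x : EuclideanSpace ℝ (Fin d)) (r : ℝ) (M : ℝ) (hM : 0 ≤ M)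
    (hmom : ∀ A : Set (EuclideanSpace ℝ (Fin d)), MeasurableSet A → A ⊆ Metric.ball x r →
      ∫ ω in X ⁻¹' A, (Y ω) ^ 2 ∂μ ≤ M * (volume A).toReal)
    (K : EuclideanSpace ℝ (Fin d) → ℝ)
    (hKmeas : Measurable K) (hKbdd : ∃ B : ℝ, ∀ u, |K u| ≤ B)
    (ρ : ℝ) (hρ : 0 < ρ) (hKsupp : Function.support K ⊆ Metric.closedBall 0 ρ)
    (a : ℝ) (ha : 0 < a) (har : a < r / ρ) :
    variance (fun ω => (n : ℝ)⁻¹ * ∑ ℓ : Fin n,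
        Yl ℓ ω * (a ^ d)⁻¹ * K (a⁻¹ • (x - Xl ℓ ω))) μ
      ≤ M * (∫ u, K u ^ 2) / (n * a ^ d) := by
  obtain ⟨B, hB⟩ := hKbdd
  set w : EuclideanSpace ℝ (Fin d) × ℝ → ℝ := fun p => p.2 * (a ^ d)⁻¹ * K (a⁻¹ • (x - p.1))
  have hw : Measurable w := by fun_prop
  have hKX : Measurable fun ω => K (a⁻¹ • (x - X ω)) := by fun_prop
  have hZ₀ : MemLp (fun ω => w (X ω, Y ω)) 2 μ :=
    (memLp_top_of_bound hKX.aestronglyMeasurable B (ae_of_all _ fun _ => hB _)).mul'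
      (hY2.mul_const _)
  have hK2 : Integrable (fun u => K u ^ 2) :=
    integrable_of_bound_of_support_subset measure_closedBall_lt_top.ne (by fun_prop)
      (fun u => by simpa [abs_pow] using pow_le_pow_left₀ (abs_nonneg _) (hB u) 2)
      ((Function.support_pow _ two_ne_zero).subset.trans hKsupp)
  have hmean := variance_mean_eq_of_identDistrib
    (fun _ _ hij => (hindep.comp (fun _ => w) (fun _ => hw)).indepFun hij)
    (fun ℓ => (hident ℓ).comp hw) hZ₀
  have hsecond := integral_sq_mul_kernel_le volume hX hY2 hM hKmeas hK2 hKsupp ha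
    fun A hA hAs => hmom A hA (hAs.trans (Metric.closedBall_subset_ball ((lt_div_iff₀ hρ).1 har)))
  rw [Fintype.card_fin] at hmean
  rw [finrank_euclideanSpace_fin] at hsecond
  calc _ = variance (fun ω => w (X ω, Y ω)) μ / n := hmean
    _ ≤ (∫ ω, w (X ω, Y ω) ^ 2 ∂μ) / n := by
      gcongr; exact variance_le_expectation_sq hZ₀.1
    _ = ((a ^ d)⁻¹) ^ 2 * (∫ ω, (Y ω * K (a⁻¹ • (x - X ω))) ^ 2 ∂μ) / n := by
      rw [← integral_const_mul]; congr 2; ext ω; simp only [w]; ring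
    _ ≤ ((a ^ d)⁻¹) ^ 2 * (M * (a ^ d * ∫ u, K u ^ 2)) / n := by gcongr
    _ = M * (∫ u, K u ^ 2) / (n * a ^ d) := by
      have := pow_pos ha d
      field_simp

/-- Variance bound for the numerator of the Nadaraya–Watson kernel estimator: for i.i.d.
copies `(X^ℓ, Y^ℓ)` of `(X,Y)` with `E[Y²] < ∞`, a localized second-moment bound
`E[Y² 1{X ∈ A}] ≤ M λ(A)` for Borel `A ⊆ B(x,r)`, and a bounded kernel `K` supported in
the closed ball of radius `ρ`, one has for every `0 < a < r/ρ`: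
`Var(n⁻¹ Σ_ℓ Y^ℓ a^{−d} K((x − X^ℓ)/a)) ≤ M (∫ K²) / (n a^d)`. -/
theorem nadaraya_watson_variance_bound
    {Ω : Type*} [MeasurableSpace Ω] (μ : Measure Ω) [IsProbabilityMeasure μ]
    (d : ℕ) (hd : 1 ≤ d) (n : ℕ) (hn : 1 ≤ n)
    (X : Ω → EuclideanSpace ℝ (Fin d)) (Y : Ω → ℝ)
    (hX : Measurable X) (hY : Measurable Y) (hY2 : MemLp Y 2 μ)
    (Xl : Fin n → Ω → EuclideanSpace ℝ (Fin d)) (Yl : Fin n → Ω → ℝ)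
    (hmeas : ∀ ℓ, Measurable (fun ω => (Xl ℓ ω, Yl ℓ ω)))
    (hindep : iIndepFun
      (fun ℓ ω => (Xl ℓ ω, Yl ℓ ω)) μ)
    (hident : ∀ ℓ : Fin n,
      IdentDistrib (fun ω => (Xl ℓ ω, Yl ℓ ω)) (fun ω => (X ω, Y ω)) μ μ)
    (x : EuclideanSpace ℝ (Fin d)) (r : ℝ) (hr : 0 < r) (M : ℝ) (hM : 0 ≤ M)
    (hmom : ∀ A : Set (EuclideanSpace ℝ (Fin d)), MeasurableSet A → A ⊆ Metric.ball x r →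
      ∫ ω in X ⁻¹' A, (Y ω) ^ 2 ∂μ ≤ M * (volume A).toReal)
    (K : EuclideanSpace ℝ (Fin d) → ℝ)
    (hKmeas : Measurable K) (hKbdd : ∃ B : ℝ, ∀ u, |K u| ≤ B)
    (ρ : ℝ) (hρ : 0 < ρ) (hKsupp : Function.support K ⊆ Metric.closedBall 0 ρ)
    (a : ℝ) (ha : 0 < a) (har : a < r / ρ) :
    variance (fun ω => (n : ℝ)⁻¹ * ∑ ℓ : Fin n,
        Yl ℓ ω * (a ^ d)⁻¹ * K (a⁻¹ • (x - Xl ℓ ω))) μ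
      ≤ M * (∫ u, K u ^ 2) / (n * a ^ d) :=
  nadaraya_watson_variance_bound_general μ d n X Y hX hY2 Xl Yl hindep hident x r M hM hmom K hKmeas
    hKbdd ρ hρ hKsupp a ha har
end

section
/- Let (X, Y) be a random vector with values in ℝ^d × [0,∞) on a probability space, with E[Y²] < ∞. Fix x ∈ ℝ^d, r > 0 and M ≥ 0, and assume there is a measurable function m : B(x,r) × [0,∞) → [0, M] such that for every c ≥ 0 and every Borel set A ⊆ B(x,r): E[ Y² · 1{Y > c} · 1{X ∈ A} ] = ∫_A m(u, c) λ(du); assume moreover that for each c ≥ 0 the function u ↦ m(u, c) is continuous at x, and that m(x, c) → 0 as c → ∞. Let K : ℝ^d → [0,∞) be bounded and measurable with support contained in the closed ball of radius ρ > 0 centered at the origin. Let (a_n) be a sequence of positive reals with a_n → 0 and n a_n^d → ∞. Then for every η > 0: lim_{n → ∞} E[ a_n^{−d} K( (x − X)/a_n )² · Y² · 1{ K( (x − X)/a_n ) · Y > η (n a_n^d)^{1/2} } ] = 0. -/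
/-!
Let `B > 0` bound `K`. On the event `K((x - X)/aₙ) Y > η (n aₙ^d)^{1/2}` the kernel is nonzero, so
`X ∈ B̄(x, ρ aₙ)`, and `Y > cₙ := η (n aₙ^d)^{1/2} / B`, where `cₙ → ∞`. So for any fixed `c₀ ≤ cₙ`
the integral is at most
`aₙ^{-d} B² E[Y² 1{Y > c₀} 1{X ∈ B̄(x, ρ aₙ)}] = aₙ^{-d} B² ∫_{B̄(x, ρ aₙ)} m(u, c₀) du`.
Choosing `c₀` with `m(x, c₀) < ε` and using continuity of `m(·, c₀)` at `x`, this is at most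
`ε B² ρ^d λ(B(0,1))` once `ρ aₙ` is small.
-/

open MeasureTheory Filter Topology Metric Module

lemma tendsto_zero_of_forall_eventually_le_mul {ι : Type*} {l : Filter ι} {f : ι → ℝ} {C : ℝ}
    (hC : 0 ≤ C) (hf : ∀ i, 0 ≤ f i) (h : ∀ ε > 0, ∀ᶠ i in l, f i ≤ ε * C) :
    Tendsto f l (𝓝 0) := by
  refine tendsto_order.2 ⟨fun b hb => .of_forall fun i => hb.trans_le (hf i), fun b hb => ?_⟩
  filter_upwards [h (b / (C + 1)) (by positivity)] with i hi
  calc f i ≤ b / (C + 1) * C := hi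
    _ < b := by rw [div_mul_eq_mul_div, div_lt_iff₀ (by positivity)]; nlinarith

section Kernel

variable {E : Type*} [NormedAddCommGroup E] [NormedSpace ℝ E]
  {K : E → ℝ} {B ρ h : ℝ}

lemma mem_closedBall_of_kernel_ne_zero (hKsupp : Function.support K ⊆ closedBall 0 ρ)
    (hh : 0 < h) {x v : E} (hK : K (h⁻¹ • (x - v)) ≠ 0) : v ∈ closedBall x (ρ * h) := by
  have hv := hKsupp hK
  rw [mem_closedBall_zero_iff, norm_smul, norm_inv, Real.norm_of_nonneg hh.le,
    inv_mul_le_iff₀ hh] at hv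
  rwa [mem_closedBall, dist_comm, dist_eq_norm, mul_comm]

lemma mem_closedBall_and_lt_of_lt_kernel_mul (hKB : ∀ u, K u ≤ B)
    (hB : 0 < B) (hKsupp : Function.support K ⊆ closedBall 0 ρ) (hh : 0 < h)
    {τ y : ℝ} (hτ : 0 ≤ τ) (hy : 0 ≤ y) {x v : E} (hlt : τ < K (h⁻¹ • (x - v)) * y) :
    v ∈ closedBall x (ρ * h) ∧ τ / B < y := by
  refine ⟨mem_closedBall_of_kernel_ne_zero hKsupp hh fun hK => ?_, ?_⟩
  · rw [hK, zero_mul] at hlt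
    exact hlt.not_ge hτ
  · rw [div_lt_iff₀' hB]
    exact hlt.trans_le (mul_le_mul_of_nonneg_right (hKB _) hy)

variable {Ω : Type*} [MeasurableSpace Ω] {μ : Measure Ω} [MeasurableSpace E] [OpensMeasurableSpace E]

lemma integral_kernel_truncated_le {X : Ω → E} {Y : Ω → ℝ} (hX : Measurable X)
    (hY : Measurable Y) (hYpos : ∀ ω, 0 ≤ Y ω) (hY2 : Integrable (fun ω => Y ω ^ 2) μ)
    (hKpos : ∀ u, 0 ≤ K u) (hKB : ∀ u, K u ≤ B) (hB : 0 < B)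
    (hKsupp : Function.support K ⊆ closedBall 0 ρ) (hh : 0 < h)
    {τ c w : ℝ} (hτ : 0 ≤ τ) (hc : c ≤ τ / B) (hw : 0 ≤ w) (x : E) :
    ∫ ω, w * K (h⁻¹ • (x - X ω)) ^ 2 * Y ω ^ 2 *
        (if τ < K (h⁻¹ • (x - X ω)) * Y ω then (1 : ℝ) else 0) ∂μ
      ≤ w * B ^ 2 * ∫ ω in X ⁻¹' closedBall x (ρ * h) ∩ {ω | c < Y ω}, Y ω ^ 2 ∂μ := by
  set S := X ⁻¹' closedBall x (ρ * h) ∩ {ω | c < Y ω}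
  have hS : MeasurableSet S :=
    (hX measurableSet_closedBall).inter (measurableSet_lt measurable_const hY)
  have hbound : ∀ ω, w * K (h⁻¹ • (x - X ω)) ^ 2 * Y ω ^ 2 *
      (if τ < K (h⁻¹ • (x - X ω)) * Y ω then (1 : ℝ) else 0)
        ≤ S.indicator (fun ω => w * B ^ 2 * Y ω ^ 2) ω := by
    intro ω
    have hK := hKpos (h⁻¹ • (x - X ω))
    split_ifs with hlt
    · obtain ⟨hXmem, hYlt⟩ :=
        mem_closedBall_and_lt_of_lt_kernel_mul hKB hB hKsupp hh hτ (hYpos ω) hlt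
      rw [Set.indicator_of_mem (show ω ∈ S from ⟨hXmem, hc.trans_lt hYlt⟩), mul_one]
      gcongr
      exact hKB _
    · rw [mul_zero]
      exact Set.indicator_nonneg (fun _ _ => by positivity) ω
  calc _ ≤ ∫ ω, S.indicator (fun ω => w * B ^ 2 * Y ω ^ 2) ω ∂μ :=
        integral_mono_of_nonneg (.of_forall fun ω => by split_ifs <;> positivity)
          ((hY2.const_mul _).indicator hS) (.of_forall hbound)
    _ = _ := by rw [integral_indicator hS, integral_const_mul]

end Kernel

lemma setIntegral_closedBall_le_of_le {E : Type*} [NormedAddCommGroup E] [NormedSpace ℝ E]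
    [FiniteDimensional ℝ E] [MeasurableSpace E] [BorelSpace E] (ν : Measure E)
    [ν.IsAddHaarMeasure] {f : E → ℝ} {x : E} {s ε : ℝ} (hs : 0 ≤ s)
    (hf₀ : ∀ u ∈ closedBall x s, 0 ≤ f u) (hfε : ∀ u ∈ closedBall x s, f u ≤ ε) :
    ∫ u in closedBall x s, f u ∂ν ≤ ε * s ^ finrank ℝ E * (ν (ball 0 1)).toReal := by
  have hnorm := norm_setIntegral_le_of_norm_le_const (μ := ν) measure_closedBall_lt_top
    fun u hu => (Real.norm_of_nonneg (hf₀ u hu)).trans_le (hfε u hu)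
  rw [measureReal_def, Measure.addHaar_closedBall _ _ hs, ENNReal.toReal_mul,
    ENNReal.toReal_ofReal (by positivity), ← mul_assoc] at hnorm
  exact (le_abs_self _).trans hnorm

theorem kernel_lindeberg_vanishing_general
    {Ω : Type*} [MeasurableSpace Ω] (μ : Measure Ω)
    (d : ℕ)
    (X : Ω → EuclideanSpace ℝ (Fin d)) (Y : Ω → ℝ)
    (hX : Measurable X) (hY : Measurable Y) (hYpos : ∀ ω, 0 ≤ Y ω) (hY2 : MemLp Y 2 μ)
    (x : EuclideanSpace ℝ (Fin d)) (r : ℝ) (hr : 0 < r) (M : ℝ)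
    (m : EuclideanSpace ℝ (Fin d) → ℝ → ℝ)
    (hmrange : ∀ u ∈ Metric.ball x r, ∀ c : ℝ, 0 ≤ c → m u c ∈ Set.Icc 0 M)
    (hmdens : ∀ c : ℝ, 0 ≤ c →
      ∀ A : Set (EuclideanSpace ℝ (Fin d)), MeasurableSet A → A ⊆ Metric.ball x r →
        ∫ ω in X ⁻¹' A ∩ {ω | c < Y ω}, (Y ω) ^ 2 ∂μ = ∫ u in A, m u c ∂volume)
    (hmcont : ∀ c : ℝ, 0 ≤ c → ContinuousAt (fun u => m u c) x)
    (hmvanish : Tendsto (fun c => m x c) atTop (𝓝 0))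
    (K : EuclideanSpace ℝ (Fin d) → ℝ)
    (hKpos : ∀ u, 0 ≤ K u) (hKbdd : ∃ B : ℝ, ∀ u, K u ≤ B)
    (ρ : ℝ) (hρ : 0 < ρ) (hKsupp : Function.support K ⊆ Metric.closedBall 0 ρ)
    (a : ℕ → ℝ) (hapos : ∀ n, 0 < a n)
    (ha0 : Tendsto a atTop (𝓝 0))
    (hna : Tendsto (fun n : ℕ => (n : ℝ) * a n ^ d) atTop atTop) :
    ∀ η : ℝ, 0 < η →
      Tendsto (fun n : ℕ => ∫ ω,
          (a n ^ d)⁻¹ * K ((a n)⁻¹ • (x - X ω)) ^ 2 * (Y ω) ^ 2 *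
            (if η * Real.sqrt ((n : ℝ) * a n ^ d) < K ((a n)⁻¹ • (x - X ω)) * Y ω
              then (1:ℝ) else 0) ∂μ)
        atTop (𝓝 0) := by
  intro η hη
  obtain ⟨B₀, hB₀⟩ := hKbdd
  set B := max B₀ 1
  have hB : 0 < B := one_pos.trans_le (le_max_right _ _)
  have hKB : ∀ u, K u ≤ B := fun u => (hB₀ u).trans (le_max_left _ _)
  set V := (volume (ball (0 : EuclideanSpace ℝ (Fin d)) 1)).toReal
  have hthreshold : Tendsto (fun n : ℕ => η * √(n * a n ^ d) / B) atTop atTop :=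
    ((Real.tendsto_sqrt_atTop.comp hna).const_mul_atTop hη).atTop_div_const hB
  refine tendsto_zero_of_forall_eventually_le_mul (C := B ^ 2 * ρ ^ d * V) (by positivity)
    (fun n => integral_nonneg fun ω => by have := hapos n; split_ifs <;> positivity)
    fun ε hε => ?_
  obtain ⟨c₀, hc₀, hmc₀⟩ := ((eventually_ge_atTop 0).and (hmvanish.eventually_lt_const hε)).exists
  obtain ⟨δ, hδ, hmδ⟩ := Metric.eventually_nhds_iff.mp ((hmcont c₀ hc₀).eventually_lt_const hmc₀)
  have hsmall : ∀ᶠ n in atTop, ρ * a n < min δ r := by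
    have hρa0 : Tendsto (fun n => ρ * a n) atTop (𝓝 0) := by simpa using ha0.const_mul ρ
    exact hρa0.eventually_lt_const (lt_min hδ hr)
  filter_upwards [hsmall, hthreshold.eventually_ge_atTop c₀] with n hρa hc
  have han := hapos n
  have hball : closedBall x (ρ * a n) ⊆ ball x r :=
    closedBall_subset_ball (hρa.trans_le (min_le_right _ _))
  calc _ ≤ (a n ^ d)⁻¹ * B ^ 2 * ∫ ω in X ⁻¹' closedBall x (ρ * a n) ∩ {ω | c₀ < Y ω}, Y ω ^ 2 ∂μ :=
        integral_kernel_truncated_le hX hY hYpos hY2.integrable_sq hKpos hKB hB hKsupp han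
          (by positivity) hc (by positivity) x
    _ = (a n ^ d)⁻¹ * B ^ 2 * ∫ u in closedBall x (ρ * a n), m u c₀ := by
        rw [hmdens c₀ hc₀ _ measurableSet_closedBall hball]
    _ ≤ (a n ^ d)⁻¹ * B ^ 2 * (ε * (ρ * a n) ^ d * V) := by
        gcongr
        simpa [finrank_euclideanSpace_fin] using setIntegral_closedBall_le_of_le volume
          (by positivity) (fun u hu => (hmrange u (hball hu) c₀ hc₀).1)
          fun u hu => (hmδ ((mem_closedBall.mp hu).trans_lt (hρa.trans_le (min_le_left _ _)))).le
    _ = ε * (B ^ 2 * ρ ^ d * V) := by field_simp; ring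

/-- Lindeberg-type vanishing condition for the kernel-weighted envelope: with a density
version `m(u,c)` of the truncated second moment `E[Y² 1{Y > c} | X = u] g(u)` near `x`
(bounded by `M`, continuous in `u` at `x`, vanishing as `c → ∞`), a nonnegative bounded
kernel `K` supported in the closed ball of radius `ρ`, and a bandwidth sequence `a_n → 0`
with `n a_n^d → ∞`, one has for every `η > 0`:
`E[ a_n^{−d} K((x−X)/a_n)² Y² 1{K((x−X)/a_n) Y > η (n a_n^d)^{1/2}} ] → 0`. -/
theorem kernel_lindeberg_vanishing
    {Ω : Type*} [MeasurableSpace Ω] (μ : Measure Ω) [IsProbabilityMeasure μ]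
    (d : ℕ) (hd : 1 ≤ d)
    (X : Ω → EuclideanSpace ℝ (Fin d)) (Y : Ω → ℝ)
    (hX : Measurable X) (hY : Measurable Y) (hYpos : ∀ ω, 0 ≤ Y ω) (hY2 : MemLp Y 2 μ)
    (x : EuclideanSpace ℝ (Fin d)) (r : ℝ) (hr : 0 < r) (M : ℝ) (hM : 0 ≤ M)
    (m : EuclideanSpace ℝ (Fin d) → ℝ → ℝ)
    (hmmeas : Measurable (fun p : EuclideanSpace ℝ (Fin d) × ℝ => m p.1 p.2))
    (hmrange : ∀ u ∈ Metric.ball x r, ∀ c : ℝ, 0 ≤ c → m u c ∈ Set.Icc 0 M)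
    (hmdens : ∀ c : ℝ, 0 ≤ c →
      ∀ A : Set (EuclideanSpace ℝ (Fin d)), MeasurableSet A → A ⊆ Metric.ball x r →
        ∫ ω in X ⁻¹' A ∩ {ω | c < Y ω}, (Y ω) ^ 2 ∂μ = ∫ u in A, m u c ∂volume)
    (hmcont : ∀ c : ℝ, 0 ≤ c → ContinuousAt (fun u => m u c) x)
    (hmvanish : Tendsto (fun c => m x c) atTop (𝓝 0))
    (K : EuclideanSpace ℝ (Fin d) → ℝ)
    (hKmeas : Measurable K) (hKpos : ∀ u, 0 ≤ K u) (hKbdd : ∃ B : ℝ, ∀ u, K u ≤ B)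
    (ρ : ℝ) (hρ : 0 < ρ) (hKsupp : Function.support K ⊆ Metric.closedBall 0 ρ)
    (a : ℕ → ℝ) (hapos : ∀ n, 0 < a n)
    (ha0 : Tendsto a atTop (𝓝 0))
    (hna : Tendsto (fun n : ℕ => (n : ℝ) * a n ^ d) atTop atTop) :
    ∀ η : ℝ, 0 < η →
      Tendsto (fun n : ℕ => ∫ ω,
          (a n ^ d)⁻¹ * K ((a n)⁻¹ • (x - X ω)) ^ 2 * (Y ω) ^ 2 *
            (if η * Real.sqrt ((n : ℝ) * a n ^ d) < K ((a n)⁻¹ • (x - X ω)) * Y ω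
              then (1:ℝ) else 0) ∂μ)
        atTop (𝓝 0) :=
  kernel_lindeberg_vanishing_general μ d X Y hX hY hYpos hY2 x r hr M m hmrange hmdens hmcont
    hmvanish K hKpos hKbdd ρ hρ hKsupp a hapos ha0 hna
end

section
/- Let (X, Y, V) be a random vector with values in ℝ^d × ℝ × ℝ on a probability space, with E[Y²] < ∞ and E[V²] < ∞. Fix x ∈ ℝ^d, r > 0 and M ≥ 0. Assume there exist measurable functions m_{YV}, m_Y, m_V : B(x,r) → ℝ such that for every Borel set A ⊆ B(x,r): E[ Y V · 1{X ∈ A} ] = ∫_A m_{YV} dλ, E[ Y · 1{X ∈ A} ] = ∫_A m_Y dλ, and E[ V · 1{X ∈ A} ] = ∫_A m_V dλ; assume m_{YV} is continuous at x and |m_Y| ≤ M, |m_V| ≤ M on B(x,r). Let K : ℝ^d → ℝ be bounded and measurable with support contained in the closed ball of radius ρ > 0 centered at the origin. For a > 0 set W_a := Y · a^{−d} K( (x − X)/a ) and U_a := V · a^{−d} K( (x − X)/a ). Then lim_{a → 0⁺} a^d · Cov( W_a, U_a ) = m_{YV}(x) · ∫_{ℝ^d} K(u)² λ(du). -/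
/-!
Each density hypothesis extends from indicators of Borel sets to bounded measurable test
functions supported in `B(x, r)` (simple functions first, then dominated convergence), so for
`a ρ < r` every moment of `W_a`, `U_a` is a Lebesgue integral against `K((x - u)/a)`. The
substitution `u = x - a v` then gives
`a^d Cov(W_a, U_a) = ∫ m_{YV}(x - a v) K(v)² dv`
`                    - a^d (∫ m_Y(x - a v) K(v) dv) (∫ m_V(x - a v) K(v) dv)`.
The first integral tends to `m_{YV}(x) ∫ K²` by dominated convergence and continuity of `m_{YV}`
at `x`; both integrals in the second term are bounded by `M ∫ |K|`, so that term is `O(a^d)`.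
-/

open MeasureTheory Filter Topology Set

section DensityTransfer

variable {Ω E : Type*} [MeasurableSpace Ω] [MeasurableSpace E] {μ : Measure Ω} {ν : Measure E}
  {X : Ω → E} {f : Ω → ℝ} {m : E → ℝ} {S : Set E}

theorem setIntegral_abs_le_integral_abs_of_setIntegral_preimage_eq (hX : Measurable X)
    (hf : Integrable f μ) (hm : Measurable m)
    (H : ∀ A, MeasurableSet A → A ⊆ S → ∫ ω in X ⁻¹' A, f ω ∂μ = ∫ u in A, m u ∂ν)
    {A : Set E} (hA : MeasurableSet A) (hAS : A ⊆ S) (hmA : IntegrableOn m A ν) :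
    ∫ u in A, |m u| ∂ν ≤ ∫ ω, |f ω| ∂μ := by
  set P := {u | 0 ≤ m u}
  have hP : MeasurableSet P := measurableSet_le measurable_const hm
  have hpos : ∫ u in A ∩ P, |m u| ∂ν = ∫ ω in X ⁻¹' A ∩ X ⁻¹' P, f ω ∂μ := by
    rw [setIntegral_congr_fun (hA.inter hP) fun u hu => abs_of_nonneg hu.2]
    exact (H _ (hA.inter hP) (inter_subset_left.trans hAS)).symm
  have hneg : ∫ u in A \ P, |m u| ∂ν = -∫ ω in X ⁻¹' A \ X ⁻¹' P, f ω ∂μ := by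
    rw [setIntegral_congr_fun (hA.diff hP) fun u hu => abs_of_neg (not_le.1 hu.2), integral_neg]
    exact congrArg Neg.neg (H _ (hA.diff hP) (sdiff_subset.trans hAS)).symm
  calc ∫ u in A, |m u| ∂ν = ∫ u in A ∩ P, |m u| ∂ν + ∫ u in A \ P, |m u| ∂ν :=
        (integral_inter_add_sdiff hP hmA.abs).symm
    _ ≤ ∫ ω in X ⁻¹' A ∩ X ⁻¹' P, |f ω| ∂μ + ∫ ω in X ⁻¹' A \ X ⁻¹' P, |f ω| ∂μ := by
        rw [hpos, hneg]
        exact add_le_add ((le_abs_self _).trans (abs_integral_le_integral_abs))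
          ((neg_le_abs _).trans (abs_integral_le_integral_abs))
    _ = ∫ ω in X ⁻¹' A, |f ω| ∂μ := integral_inter_add_sdiff (hP.preimage hX) hf.abs.integrableOn
    _ ≤ ∫ ω, |f ω| ∂μ := setIntegral_le_integral hf.abs (ae_of_all _ fun _ => abs_nonneg _)

/-- The hypothesis alone does not exclude a non-integrable `m` (whose set integrals are all
`0` by convention); truncating to `{|m| ≤ n}` makes every set integral genuine. -/
theorem integrableOn_of_setIntegral_preimage_eq (hX : Measurable X) (hf : Integrable f μ)
    (hm : Measurable m) (hS : MeasurableSet S) (hSν : ν S ≠ ⊤)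
    (H : ∀ A, MeasurableSet A → A ⊆ S → ∫ ω in X ⁻¹' A, f ω ∂μ = ∫ u in A, m u ∂ν) :
    IntegrableOn m S ν := by
  set A : ℕ → Set E := fun n => S ∩ {u | |m u| ≤ n}
  have hA : ∀ n, MeasurableSet (A n) := fun n =>
    hS.inter (measurableSet_le hm.abs measurable_const)
  have hmA : ∀ n, IntegrableOn m (A n) ν := fun n =>
    Measure.integrableOn_of_bounded (ne_top_of_le_ne_top hSν (measure_mono inter_subset_left))
      hm.aestronglyMeasurable
      ((ae_restrict_iff' (hA n)).2 (ae_of_all _ fun u hu => hu.2))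
  have hAS : ⋃ n, A n = S := by
    refine (iUnion_subset fun n => inter_subset_left).antisymm fun u hu => ?_
    obtain ⟨n, hn⟩ := exists_nat_ge |m u|
    exact mem_iUnion.2 ⟨n, hu, hn⟩
  have hAmono : Monotone A := fun i j hij u hu =>
    ⟨hu.1, show |m u| ≤ j from hu.2.trans (Nat.cast_le.2 hij)⟩
  refine ⟨hm.aestronglyMeasurable, ?_⟩
  rw [HasFiniteIntegral, ← hAS, setLIntegral_iUnion_of_directed _ hAmono.directed_le]
  refine (iSup_le fun n => ?_).trans_lt (ENNReal.ofReal_lt_top (r := ∫ ω, |f ω| ∂μ))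
  rw [← ofReal_integral_norm_eq_lintegral_enorm (hmA n)]
  exact ENNReal.ofReal_le_ofReal (setIntegral_abs_le_integral_abs_of_setIntegral_preimage_eq
    hX hf hm H (hA n) inter_subset_left (hmA n))

theorem integral_mul_simpleFunc_comp_eq (hX : Measurable X) (hf : Integrable f μ)
    (hm : Integrable m ν)
    (H : ∀ A, MeasurableSet A → ∫ ω in X ⁻¹' A, f ω ∂μ = ∫ u in A, m u ∂ν) (ψ : SimpleFunc E ℝ) :
    ∫ ω, f ω * ψ (X ω) ∂μ = ∫ u, m u * ψ u ∂ν := by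
  have hint : ∀ ψ : SimpleFunc E ℝ,
      Integrable (fun ω => f ω * ψ (X ω)) μ ∧ Integrable (fun u => m u * ψ u) ν := fun ψ => by
    obtain ⟨C, hC⟩ := ψ.exists_forall_norm_le
    exact ⟨hf.mul_bdd (ψ.measurable.comp hX).aestronglyMeasurable (ae_of_all _ fun ω => hC _),
      hm.mul_bdd ψ.measurable.aestronglyMeasurable (ae_of_all _ hC)⟩
  induction ψ using SimpleFunc.induction with
  | @const c s hs =>
    trans (∫ ω in X ⁻¹' s, f ω ∂μ) * c
    · rw [← integral_mul_const, ← integral_indicator (hs.preimage hX)]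
      congr 1 with ω
      by_cases h : X ω ∈ s <;> simp [h]
    · rw [H s hs, ← integral_mul_const, ← integral_indicator hs]
      congr 1 with u
      by_cases h : u ∈ s <;> simp [h]
  | @add ψ₁ ψ₂ _ h₁ h₂ =>
    simp only [SimpleFunc.coe_add, Pi.add_apply, mul_add]
    rw [integral_add (hint ψ₁).1 (hint ψ₂).1, integral_add (hint ψ₁).2 (hint ψ₂).2, h₁, h₂]

theorem tendsto_integral_mul_of_tendsto_of_abs_le {α : Type*} [MeasurableSpace α] {κ : Measure α}
    {g : α → ℝ} (hg : Integrable g κ) {F : ℕ → α → ℝ} {G : α → ℝ}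
    (hF : ∀ n, AEStronglyMeasurable (F n) κ) {C : ℝ} (hFC : ∀ n a, |F n a| ≤ C)
    (hFG : ∀ a, Tendsto (fun n => F n a) atTop (𝓝 (G a))) :
    Tendsto (fun n => ∫ a, g a * F n a ∂κ) atTop (𝓝 (∫ a, g a * G a ∂κ)) := by
  refine tendsto_integral_of_dominated_convergence (fun a => C * |g a|)
    (fun n => hg.1.mul (hF n)) (hg.abs.const_mul C) (fun n => ae_of_all _ fun a => ?_)
    (ae_of_all _ fun a => (hFG a).const_mul (g a))
  rw [norm_mul, Real.norm_eq_abs, Real.norm_eq_abs, mul_comm]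
  exact mul_le_mul_of_nonneg_right (hFC n a) (abs_nonneg _)

theorem integral_mul_comp_eq_of_forall_setIntegral_preimage_eq (hX : Measurable X)
    (hf : Integrable f μ) (hm : Integrable m ν)
    (H : ∀ A, MeasurableSet A → ∫ ω in X ⁻¹' A, f ω ∂μ = ∫ u in A, m u ∂ν)
    {φ : E → ℝ} (hφ : Measurable φ) {C : ℝ} (hφC : ∀ u, |φ u| ≤ C) :
    ∫ ω, f ω * φ (X ω) ∂μ = ∫ u, m u * φ u ∂ν := by
  set ψ : ℕ → SimpleFunc E ℝ := SimpleFunc.approxOn φ hφ univ 0 (mem_univ 0)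
  have hψC : ∀ n u, |ψ n u| ≤ C + C := fun n u =>
    (SimpleFunc.norm_approxOn_zero_le hφ (mem_univ 0) u n).trans (add_le_add (hφC u) (hφC u))
  have hψφ : ∀ u, Tendsto (fun n => ψ n u) atTop (𝓝 (φ u)) := fun u =>
    SimpleFunc.tendsto_approxOn hφ (mem_univ 0) (subset_closure (mem_univ _))
  have hΩ := tendsto_integral_mul_of_tendsto_of_abs_le hf (F := fun n ω => ψ n (X ω))
    (fun n => ((ψ n).measurable.comp hX).aestronglyMeasurable) (fun n ω => hψC n (X ω))
    (fun ω => hψφ (X ω))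
  have hE := tendsto_integral_mul_of_tendsto_of_abs_le hm
    (fun n => (ψ n).measurable.aestronglyMeasurable) hψC hψφ
  simp only [integral_mul_simpleFunc_comp_eq hX hf hm H] at hΩ
  exact tendsto_nhds_unique hΩ hE

theorem integral_mul_comp_eq_of_support_subset (hX : Measurable X) (hf : Integrable f μ)
    (hm : Measurable m) (hS : MeasurableSet S) (hSν : ν S ≠ ⊤)
    (H : ∀ A, MeasurableSet A → A ⊆ S → ∫ ω in X ⁻¹' A, f ω ∂μ = ∫ u in A, m u ∂ν)
    {φ : E → ℝ} (hφ : Measurable φ) {C : ℝ} (hφC : ∀ u, |φ u| ≤ C)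
    (hφS : Function.support φ ⊆ S) :
    ∫ ω, f ω * φ (X ω) ∂μ = ∫ u, m u * φ u ∂ν := by
  have hXS : MeasurableSet (X ⁻¹' S) := hS.preimage hX
  have key := integral_mul_comp_eq_of_forall_setIntegral_preimage_eq hX (hf.indicator hXS)
    ((integrable_indicator_iff hS).2 (integrableOn_of_setIntegral_preimage_eq hX hf hm hS hSν H))
    (fun A hA => by
      rw [setIntegral_indicator hXS, setIntegral_indicator hS]
      exact H _ (hA.inter hS) inter_subset_right) hφ hφC
  have hφ_eq : ∀ u, u ∉ S → φ u = 0 := fun u hu => Function.notMem_support.1 fun h => hu (hφS h)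
  convert key using 2
  · ext ω
    by_cases h : X ω ∈ S <;> simp [h, hφ_eq]
  · ext u
    by_cases h : u ∈ S <;> simp [h, hφ_eq]

end DensityTransfer

section Rescaling

theorem eventually_abs_mul_lt (ρ : ℝ) {δ : ℝ} (hδ : 0 < δ) : ∀ᶠ a : ℝ in 𝓝 0, |a| * ρ < δ :=
  ((continuous_abs.mul continuous_const).tendsto' (0 : ℝ) 0 (by simp)).eventually (gt_mem_nhds hδ)

variable {E : Type*} [NormedAddCommGroup E]

theorem integrable_of_abs_le_of_support_subset_closedBall [ProperSpace E] [MeasurableSpace E]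
    [OpensMeasurableSpace E] {ν : Measure E} [IsFiniteMeasureOnCompacts ν] {w : E → ℝ}
    (hw : Measurable w) {C : ℝ} (hwC : ∀ v, |w v| ≤ C) {ρ : ℝ}
    (hw_supp : Function.support w ⊆ Metric.closedBall 0 ρ) : Integrable w ν :=
  (integrableOn_iff_integrable_of_support_subset hw_supp).1 <|
    Measure.integrableOn_of_bounded measure_closedBall_lt_top.ne hw.aestronglyMeasurable
      (ae_of_all _ fun v => (Real.norm_eq_abs _).trans_le (hwC v))

variable [NormedSpace ℝ E]

theorem dist_sub_smul_le {x v : E} {ρ : ℝ} (hv : v ∈ Metric.closedBall 0 ρ) (a : ℝ) :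
    dist (x - a • v) x ≤ |a| * ρ := by
  rw [dist_eq_norm, sub_sub_cancel_left, norm_neg, norm_smul, Real.norm_eq_abs]
  exact mul_le_mul_of_nonneg_left (mem_closedBall_zero_iff.1 hv) (abs_nonneg a)

variable [MeasurableSpace E]

theorem abs_integral_comp_sub_smul_mul_le {ν : Measure E} {g w : E → ℝ} {x : E} {r M : ℝ}
    (hg : ∀ u ∈ Metric.ball x r, |g u| ≤ M) (hw : Integrable w ν) {ρ : ℝ}
    (hw_supp : Function.support w ⊆ Metric.closedBall 0 ρ) {a : ℝ} (ha : |a| * ρ < r) :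
    |∫ v, g (x - a • v) * w v ∂ν| ≤ M * ∫ v, |w v| ∂ν := by
  rw [← Real.norm_eq_abs, ← integral_const_mul]
  refine norm_integral_le_of_norm_le (hw.abs.const_mul M) (ae_of_all _ fun v => ?_)
  by_cases hv : w v = 0
  · simp [hv]
  rw [Real.norm_eq_abs, abs_mul]
  exact mul_le_mul_of_nonneg_right
    (hg _ (Metric.mem_ball.2 ((dist_sub_smul_le (hw_supp hv) a).trans_lt ha))) (abs_nonneg _)

theorem isBoundedUnder_integral_comp_sub_smul_mul {ν : Measure E} {g w : E → ℝ} {x : E} {r M : ℝ} (hr : 0 < r) (hg : ∀ u ∈ Metric.ball x r, |g u| ≤ M)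
    (hw : Integrable w ν) {ρ : ℝ} (hw_supp : Function.support w ⊆ Metric.closedBall 0 ρ) :
    IsBoundedUnder (· ≤ ·) (𝓝 0) (norm ∘ fun a : ℝ => ∫ v, g (x - a • v) * w v ∂ν) :=
  isBoundedUnder_of_eventually_le <| (eventually_abs_mul_lt ρ hr).mono fun _ ha =>
    abs_integral_comp_sub_smul_mul_le hg hw hw_supp ha

variable [BorelSpace E]

theorem integral_comp_sub_smul [FiniteDimensional ℝ E] (ν : Measure E) [ν.IsAddHaarMeasure]
    (h : E → ℝ) (x : E) {a : ℝ} (ha : 0 < a) :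
    ∫ v, h (x - a • v) ∂ν = (a ^ Module.finrank ℝ E)⁻¹ * ∫ u, h u ∂ν := by
  rw [Measure.integral_comp_smul ν (fun w => h (x - w)) a, integral_sub_left_eq_self,
    abs_of_pos (by positivity), smul_eq_mul]

theorem tendsto_integral_comp_sub_smul_mul {ν : Measure E} {g w : E → ℝ} {x : E}
    (hg : Measurable g) (hgx : ContinuousAt g x) (hw : Integrable w ν) {ρ : ℝ}
    (hw_supp : Function.support w ⊆ Metric.closedBall 0 ρ) :
    Tendsto (fun a : ℝ => ∫ v, g (x - a • v) * w v ∂ν) (𝓝 0) (𝓝 (g x * ∫ v, w v ∂ν)) := by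
  obtain ⟨δ, hδ, hgδ⟩ := Metric.eventually_nhds_iff.1 <|
    hgx.abs.eventually (gt_mem_nhds (lt_add_one |g x|))
  rw [← integral_const_mul]
  refine tendsto_integral_filter_of_dominated_convergence (fun v => (|g x| + 1) * |w v|)
    (Eventually.of_forall fun a => (hg.comp (continuous_const.sub
      (continuous_const_smul a)).measurable).aestronglyMeasurable.mul hw.1) ?_
    (hw.abs.const_mul _) (ae_of_all _ fun v => ?_)
  · filter_upwards [eventually_abs_mul_lt ρ hδ] with a ha
    refine ae_of_all _ fun v => ?_
    by_cases hv : w v = 0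
    · simp [hv]
    rw [Real.norm_eq_abs, abs_mul]
    exact mul_le_mul_of_nonneg_right
      (hgδ ((dist_sub_smul_le (hw_supp hv) a).trans_lt ha)).le (abs_nonneg _)
  · have hxv : Tendsto (fun a : ℝ => x - a • v) (𝓝 0) (𝓝 x) :=
      (continuous_const.sub (continuous_id.smul continuous_const)).tendsto' 0 x (by simp)
    exact (hgx.tendsto.comp hxv).mul_const _

theorem integral_mul_kernel_comp_eq [FiniteDimensional ℝ E] {ν : Measure E} [ν.IsAddHaarMeasure]
    {Ω : Type*} [MeasurableSpace Ω] {μ : Measure Ω} {X : Ω → E} {f : Ω → ℝ} {m : E → ℝ}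
    {x : E} {r : ℝ} (hX : Measurable X) (hf : Integrable f μ) (hm : Measurable m)
    (H : ∀ A, MeasurableSet A → A ⊆ Metric.ball x r →
      ∫ ω in X ⁻¹' A, f ω ∂μ = ∫ u in A, m u ∂ν)
    {w : E → ℝ} (hw : Measurable w) {C : ℝ} (hwC : ∀ v, |w v| ≤ C) {ρ : ℝ}
    (hw_supp : Function.support w ⊆ Metric.closedBall 0 ρ) {a : ℝ} (ha : 0 < a)
    (haρ : a * ρ < r) :
    ∫ ω, f ω * w (a⁻¹ • (x - X ω)) ∂μ = a ^ Module.finrank ℝ E * ∫ v, m (x - a • v) * w v ∂ν := by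
  have hsupp : Function.support (fun u => w (a⁻¹ • (x - u))) ⊆ Metric.ball x r := fun u hu => by
    have hu' : x - a • a⁻¹ • (x - u) = u := by rw [smul_inv_smul₀ ha.ne', sub_sub_cancel]
    have := dist_sub_smul_le (x := x) (hw_supp hu) a
    rw [hu', abs_of_pos ha] at this
    exact Metric.mem_ball.2 (this.trans_lt haρ)
  rw [integral_mul_comp_eq_of_support_subset hX hf hm measurableSet_ball measure_ball_lt_top.ne H
    (φ := fun u => w (a⁻¹ • (x - u))) (hw.comp (by fun_prop)) (fun u => hwC _) hsupp]
  have hcv := integral_comp_sub_smul ν (fun u => m u * w (a⁻¹ • (x - u))) x ha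
  simp only [sub_sub_cancel, inv_smul_smul₀ ha.ne'] at hcv
  rw [hcv, mul_inv_cancel_left₀ (pow_ne_zero _ ha.ne')]

theorem rescaled_kernel_covariance_eq [FiniteDimensional ℝ E] {ν : Measure E}
    [ν.IsAddHaarMeasure] {n : ℕ} (hn : Module.finrank ℝ E = n) {Ω : Type*} [MeasurableSpace Ω]
    {μ : Measure Ω} {X : Ω → E} {Y V : Ω → ℝ} {mYV mY mV : E → ℝ} {x : E} {r : ℝ}
    (hX : Measurable X) (hY : Integrable Y μ) (hV : Integrable V μ)
    (hYV : Integrable (fun ω => Y ω * V ω) μ)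
    (hmYV : Measurable mYV) (hmY : Measurable mY) (hmV : Measurable mV)
    (hYVdens : ∀ A, MeasurableSet A → A ⊆ Metric.ball x r →
      ∫ ω in X ⁻¹' A, Y ω * V ω ∂μ = ∫ u in A, mYV u ∂ν)
    (hYdens : ∀ A, MeasurableSet A → A ⊆ Metric.ball x r →
      ∫ ω in X ⁻¹' A, Y ω ∂μ = ∫ u in A, mY u ∂ν)
    (hVdens : ∀ A, MeasurableSet A → A ⊆ Metric.ball x r →
      ∫ ω in X ⁻¹' A, V ω ∂μ = ∫ u in A, mV u ∂ν)
    {K : E → ℝ} (hK : Measurable K) {B : ℝ} (hKB : ∀ v, |K v| ≤ B) {ρ : ℝ}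
    (hKsupp : Function.support K ⊆ Metric.closedBall 0 ρ) {a : ℝ} (ha : 0 < a)
    (haρ : a * ρ < r) :
    a ^ n *
        ((∫ ω, (Y ω * (a ^ n)⁻¹ * K (a⁻¹ • (x - X ω))) *
            (V ω * (a ^ n)⁻¹ * K (a⁻¹ • (x - X ω))) ∂μ)
          - (∫ ω, Y ω * (a ^ n)⁻¹ * K (a⁻¹ • (x - X ω)) ∂μ) *
            (∫ ω, V ω * (a ^ n)⁻¹ * K (a⁻¹ • (x - X ω)) ∂μ))
      = ∫ v, mYV (x - a • v) * K v ^ 2 ∂ν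
        - a ^ n * (∫ v, mY (x - a • v) * K v ∂ν) * ∫ v, mV (x - a • v) * K v ∂ν := by
  have hK2B (v : E) : |K v ^ 2| ≤ B ^ 2 := by
    rw [abs_pow]; exact pow_le_pow_left₀ (abs_nonneg _) (hKB v) 2
  have hK2supp : Function.support (fun v => K v ^ 2) ⊆ Metric.closedBall 0 ρ :=
    (Function.support_pow K two_ne_zero).subset.trans hKsupp
  have hpull (Z : Ω → ℝ) : ∫ ω, Z ω * (a ^ n)⁻¹ * K (a⁻¹ • (x - X ω)) ∂μ
      = (a ^ n)⁻¹ * ∫ ω, Z ω * K (a⁻¹ • (x - X ω)) ∂μ := by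
    rw [← integral_const_mul]; congr 1 with ω; ring
  have hpull₂ : ∫ ω, (Y ω * (a ^ n)⁻¹ * K (a⁻¹ • (x - X ω))) *
      (V ω * (a ^ n)⁻¹ * K (a⁻¹ • (x - X ω))) ∂μ
      = ((a ^ n)⁻¹ * (a ^ n)⁻¹) * ∫ ω, (Y ω * V ω) * K (a⁻¹ • (x - X ω)) ^ 2 ∂μ := by
    rw [← integral_const_mul]; congr 1 with ω; ring
  rw [hpull₂, hpull, hpull,
    integral_mul_kernel_comp_eq (f := fun ω => Y ω * V ω) hX hYV hmYV hYVdens (hK.pow_const 2)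
      hK2B hK2supp ha haρ,
    integral_mul_kernel_comp_eq hX hY hmY hYdens hK hKB hKsupp ha haρ,
    integral_mul_kernel_comp_eq hX hV hmV hVdens hK hKB hKsupp ha haρ, hn]
  field_simp

end Rescaling

theorem kernel_rescaled_covariance_limit_general
    {Ω : Type*} [MeasurableSpace Ω] (μ : Measure Ω) [IsProbabilityMeasure μ]
    (d : ℕ) (hd : 1 ≤ d)
    (X : Ω → EuclideanSpace ℝ (Fin d)) (Y V : Ω → ℝ)
    (hX : Measurable X)
    (hY2 : MemLp Y 2 μ) (hV2 : MemLp V 2 μ)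
    (x : EuclideanSpace ℝ (Fin d)) (r : ℝ) (hr : 0 < r) (M : ℝ)
    (mYV mY mV : EuclideanSpace ℝ (Fin d) → ℝ)
    (hmYVmeas : Measurable mYV) (hmYmeas : Measurable mY) (hmVmeas : Measurable mV)
    (hYVdens : ∀ A : Set (EuclideanSpace ℝ (Fin d)), MeasurableSet A →
      A ⊆ Metric.ball x r → ∫ ω in X ⁻¹' A, Y ω * V ω ∂μ = ∫ u in A, mYV u ∂volume)
    (hYdens : ∀ A : Set (EuclideanSpace ℝ (Fin d)), MeasurableSet A →
      A ⊆ Metric.ball x r → ∫ ω in X ⁻¹' A, Y ω ∂μ = ∫ u in A, mY u ∂volume)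
    (hVdens : ∀ A : Set (EuclideanSpace ℝ (Fin d)), MeasurableSet A →
      A ⊆ Metric.ball x r → ∫ ω in X ⁻¹' A, V ω ∂μ = ∫ u in A, mV u ∂volume)
    (hmYVcont : ContinuousAt mYV x)
    (hmYbdd : ∀ u ∈ Metric.ball x r, |mY u| ≤ M)
    (hmVbdd : ∀ u ∈ Metric.ball x r, |mV u| ≤ M)
    (K : EuclideanSpace ℝ (Fin d) → ℝ)
    (hKmeas : Measurable K) (hKbdd : ∃ B : ℝ, ∀ u, |K u| ≤ B)
    (ρ : ℝ) (hKsupp : Function.support K ⊆ Metric.closedBall 0 ρ) :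
    Tendsto (fun a : ℝ =>
        a ^ d *
          ((∫ ω, (Y ω * (a ^ d)⁻¹ * K (a⁻¹ • (x - X ω))) *
              (V ω * (a ^ d)⁻¹ * K (a⁻¹ • (x - X ω))) ∂μ)
            - (∫ ω, Y ω * (a ^ d)⁻¹ * K (a⁻¹ • (x - X ω)) ∂μ) *
              (∫ ω, V ω * (a ^ d)⁻¹ * K (a⁻¹ • (x - X ω)) ∂μ)))
      (𝓝[>] 0) (𝓝 (mYV x * ∫ u, K u ^ 2)) := by
  obtain ⟨B, hB⟩ := hKbdd
  have hKint := integrable_of_abs_le_of_support_subset_closedBall (ν := volume) hKmeas hB hKsupp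
  have hK2int : Integrable (fun v => K v ^ 2) := by
    simpa only [sq] using hKint.mul_bdd hKmeas.aestronglyMeasurable
      (ae_of_all _ fun v => (Real.norm_eq_abs _).trans_le (hB v))
  have hmain := tendsto_integral_comp_sub_smul_mul hmYVmeas hmYVcont hK2int
    ((Function.support_pow K two_ne_zero).subset.trans hKsupp)
  have hrem := (((continuous_pow d).tendsto' 0 0 (zero_pow (by omega))).zero_mul_isBoundedUnder_le
    (isBoundedUnder_integral_comp_sub_smul_mul hr hmYbdd hKint hKsupp)).zero_mul_isBoundedUnder_le
    (isBoundedUnder_integral_comp_sub_smul_mul hr hmVbdd hKint hKsupp)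
  have hlim := hmain.sub hrem
  rw [sub_zero] at hlim
  refine (hlim.mono_left nhdsWithin_le_nhds).congr' ?_
  filter_upwards [eventually_mem_nhdsWithin,
    nhdsWithin_le_nhds (eventually_abs_mul_lt ρ hr)] with a (ha : 0 < a) haρ
  rw [abs_of_pos ha] at haρ
  exact (rescaled_kernel_covariance_eq finrank_euclideanSpace_fin hX (hY2.integrable one_le_two)
    (hV2.integrable one_le_two) (hY2.integrable_mul hV2) hmYVmeas hmYmeas hmVmeas hYVdens hYdens
    hVdens hKmeas hB hKsupp ha haρ).symm

/-- Rescaled covariance limit for kernel-weighted variables: with density versions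
`m_{YV}, m_Y, m_V` near `x` of `E[YV | X = u] g(u)`, `E[Y | X = u] g(u)`,
`E[V | X = u] g(u)` (the first continuous at `x`, the latter two bounded by `M`), and a
bounded kernel `K` supported in the closed ball of radius `ρ`, setting
`W_a = Y a^{−d} K((x−X)/a)` and `U_a = V a^{−d} K((x−X)/a)`, one has
`a^d Cov(W_a, U_a) → m_{YV}(x) ∫ K²` as `a → 0⁺`. -/
theorem kernel_rescaled_covariance_limit
    {Ω : Type*} [MeasurableSpace Ω] (μ : Measure Ω) [IsProbabilityMeasure μ]
    (d : ℕ) (hd : 1 ≤ d)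
    (X : Ω → EuclideanSpace ℝ (Fin d)) (Y V : Ω → ℝ)
    (hX : Measurable X) (hY : Measurable Y) (hV : Measurable V)
    (hY2 : MemLp Y 2 μ) (hV2 : MemLp V 2 μ)
    (x : EuclideanSpace ℝ (Fin d)) (r : ℝ) (hr : 0 < r) (M : ℝ) (hM : 0 ≤ M)
    (mYV mY mV : EuclideanSpace ℝ (Fin d) → ℝ)
    (hmYVmeas : Measurable mYV) (hmYmeas : Measurable mY) (hmVmeas : Measurable mV)
    (hYVdens : ∀ A : Set (EuclideanSpace ℝ (Fin d)), MeasurableSet A →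
      A ⊆ Metric.ball x r → ∫ ω in X ⁻¹' A, Y ω * V ω ∂μ = ∫ u in A, mYV u ∂volume)
    (hYdens : ∀ A : Set (EuclideanSpace ℝ (Fin d)), MeasurableSet A →
      A ⊆ Metric.ball x r → ∫ ω in X ⁻¹' A, Y ω ∂μ = ∫ u in A, mY u ∂volume)
    (hVdens : ∀ A : Set (EuclideanSpace ℝ (Fin d)), MeasurableSet A →
      A ⊆ Metric.ball x r → ∫ ω in X ⁻¹' A, V ω ∂μ = ∫ u in A, mV u ∂volume)
    (hmYVcont : ContinuousAt mYV x)
    (hmYbdd : ∀ u ∈ Metric.ball x r, |mY u| ≤ M)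
    (hmVbdd : ∀ u ∈ Metric.ball x r, |mV u| ≤ M)
    (K : EuclideanSpace ℝ (Fin d) → ℝ)
    (hKmeas : Measurable K) (hKbdd : ∃ B : ℝ, ∀ u, |K u| ≤ B)
    (ρ : ℝ) (hρ : 0 < ρ) (hKsupp : Function.support K ⊆ Metric.closedBall 0 ρ) :
    Tendsto (fun a : ℝ =>
        a ^ d *
          ((∫ ω, (Y ω * (a ^ d)⁻¹ * K (a⁻¹ • (x - X ω))) *
              (V ω * (a ^ d)⁻¹ * K (a⁻¹ • (x - X ω))) ∂μ)
            - (∫ ω, Y ω * (a ^ d)⁻¹ * K (a⁻¹ • (x - X ω)) ∂μ) *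
              (∫ ω, V ω * (a ^ d)⁻¹ * K (a⁻¹ • (x - X ω)) ∂μ)))
      (𝓝[>] 0) (𝓝 (mYV x * ∫ u, K u ^ 2)) :=
  kernel_rescaled_covariance_limit_general μ d hd X Y V hX hY2 hV2 x r hr M mYV mY mV hmYVmeas
    hmYmeas hmVmeas hYVdens hYdens hVdens hmYVcont hmYbdd hmVbdd K hKmeas hKbdd ρ hKsupp
end
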